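/- arXiv:2410.05580 — 6 statements merged into one kernel-verified Lean document; each statement's English description precedes it below -/
import Mathlib

section
/- Let P be a set of an even number n of distinct real numbers, and let H be a Hamiltonian path on P (viewed as points in ℝ with edge lengths |x - y|) that has maximum total length among all Hamiltonian paths on P. Then the two endpoints of H lie on opposite sides of the median of P (i.e., one endpoint is among the smallest n/2 elements and the other is among the largest n/2 elements). -/
/-- Length of a path through a list of reals: sum of absolute differences of
consecutive elements. -/
noncomputable def pathLen (l : List ℝ) : ℝ :=
  ((l.zip l.tail).map fun p => |p.1 - p.2|).sum

/-- A Hamiltonian path on a finite set `P ⊆ ℝ`, given as a list visiting each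
element exactly once. -/
def IsHamPathOn (P : Finset ℝ) (l : List ℝ) : Prop :=
  l.Nodup ∧ l.toFinset = P

/-- The median of a finite set of reals: the middle element if the cardinality is
odd, and the mean of the two middle elements if it is even. -/
noncomputable def medianOf (P : Finset ℝ) : ℝ :=
  let s := P.sort (· ≤ ·)
  if P.card % 2 = 1 then s.getD (P.card / 2) 0
  else (s.getD (P.card / 2 - 1) 0 + s.getD (P.card / 2) 0) / 2

namespace LongestPathAux

/-- Interleave a list of pairs into a single list. -/
def J : List (ℝ × ℝ) → List ℝ
  | [] => []
  | p :: r => p.1 :: p.2 :: J r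

lemma J_perm : ∀ pairs : List (ℝ × ℝ),
    (J pairs).Perm (pairs.map Prod.fst ++ pairs.map Prod.snd)
  | [] => by simp [J]
  | p :: r => by
    simp only [J, List.map_cons, List.cons_append]
    exact (((J_perm r).cons p.2).trans List.perm_middle.symm).cons p.1

lemma J_headI (x y : ℝ) (l1 l2 : List ℝ) :
    (J ((x :: l1).zip (y :: l2))).headI = x := by
  simp [J, List.zip_cons_cons]

lemma J_getLastD : ∀ (p : ℝ × ℝ) (r : List (ℝ × ℝ)),
    (J (p :: r)).getLastD 0 = ((p :: r).getLastD (0, 0)).2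
  | p, [] => by simp [J, List.getLastD_cons]
  | p, q :: r => by
    have ih := J_getLastD q r
    simp only [J, List.getLastD_cons] at *
    cases r with
    | nil => simpa [J] using ih
    | cons q' r' => simpa [J, List.getLastD_cons] using ih

lemma zip_getLastD : ∀ (x y : ℝ) (l1 l2 : List ℝ), l1.length = l2.length →
    ((x :: l1).zip (y :: l2)).getLastD (0, 0)
      = ((x :: l1).getLastD 0, (y :: l2).getLastD 0)
  | x, y, [], l2, h => by
    have : l2 = [] := List.length_eq_zero_iff.mp h.symm
    subst this; simp [List.getLastD_cons]
  | x, y, a :: t1, l2, h => by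
    cases l2 with
    | nil => simp at h
    | cons b t2 =>
      have h' : t1.length = t2.length := by simpa using h
      have ih := zip_getLastD a b t1 t2 h'
      simp only [List.zip_cons_cons, List.getLastD_cons] at *
      cases t1 with
      | nil =>
        have : t2 = [] := List.length_eq_zero_iff.mp h'.symm
        subst this; simp [List.getLastD_cons]
      | cons c t1' =>
        cases t2 with
        | nil => simp at h'
        | cons d t2' => simpa [List.zip_cons_cons, List.getLastD_cons] using ih

/-- All consecutive pairs in `J pairs` cross the median when each pair straddles it. -/
lemma J_chain (m : ℝ) : ∀ pairs : List (ℝ × ℝ),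
    (∀ q ∈ pairs, m < q.1 ∧ q.2 < m) →
    ∀ p ∈ (J pairs).zip (J pairs).tail,
      (m < p.1 ∧ p.2 < m) ∨ (p.1 < m ∧ m < p.2)
  | [], _ => by simp [J]
  | q :: r, h => by
    have hq := h q (by simp)
    cases r with
    | nil =>
      intro p hp
      simp only [J, List.zip_cons_cons, List.tail_cons, List.zip_nil_right,
        List.mem_cons, List.not_mem_nil, or_false] at hp
      subst hp; exact Or.inl hq
    | cons q' r' =>
      have hq' := h q' (by simp)
      have ih := J_chain m (q' :: r') (fun x hx => h x (by simp [hx]))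
      intro p hp
      simp only [J, List.zip_cons_cons, List.tail_cons, List.mem_cons] at hp
      rcases hp with rfl | rfl | hp
      · exact Or.inl hq
      · exact Or.inr ⟨hq.2, hq'.1⟩
      · exact ih p (by simpa [J, List.zip_cons_cons] using hp)

/-- Sum over consecutive pairs of `f x + f y` equals `2 Σ f − f head − f last`. -/
lemma edgeSum_eq (f : ℝ → ℝ) : ∀ l : List ℝ, l ≠ [] →
    ((l.zip l.tail).map fun p => f p.1 + f p.2).sum
      = 2 * (l.map f).sum - f l.headI - f (l.getLastD 0)
  | [], h => absurd rfl h
  | [a], _ => by simp [List.getLastD_cons]; ring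
  | a :: b :: t, _ => by
    have ih := edgeSum_eq f (b :: t) (by simp)
    simp only [List.tail_cons, List.zip_cons_cons, List.map_cons, List.sum_cons,
      List.headI, List.getLastD_cons] at *
    rw [ih]; ring

lemma pathLen_cons (a b : ℝ) (t : List ℝ) :
    pathLen (a :: b :: t) = |a - b| + pathLen (b :: t) := by
  simp [pathLen]

/-- Subtracting a gap at one special pair. -/
lemma sum_sub_of_mem {u w : ℝ × ℝ → ℝ} {g : ℝ} (L : List (ℝ × ℝ))
    (hall : ∀ p ∈ L, u p ≤ w p) (p0 : ℝ × ℝ) (hp0 : p0 ∈ L)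
    (h0 : u p0 ≤ w p0 - g) : (L.map u).sum ≤ (L.map w).sum - g := by
  obtain ⟨s, t, rfl⟩ := List.append_of_mem hp0
  have hs : ((s.map u).sum) ≤ (s.map w).sum :=
    List.sum_le_sum fun p hp => hall p (by simp [hp])
  have ht : ((t.map u).sum) ≤ (t.map w).sum :=
    List.sum_le_sum fun p hp => hall p (by simp [hp])
  simp only [List.map_append, List.sum_append, List.map_cons, List.sum_cons]
  linarith

noncomputable def χ (m v : ℝ) : ℝ := if m < v then 1 else -1

lemma chi_cases (m v : ℝ) : χ m v = 1 ∨ χ m v = -1 := by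
  unfold χ; split <;> simp

lemma chi_ne_zero (m v : ℝ) : χ m v ≠ 0 := by
  unfold χ; split <;> norm_num

/-- In a list whose consecutive elements always alternate sides, the sign of the
last element is determined by parity. -/
lemma chi_last (m : ℝ) : ∀ (l : List ℝ) (a : ℝ),
    (∀ p ∈ (a :: l).zip l, χ m p.2 = -χ m p.1) →
    χ m ((a :: l).getLastD 0) = (-1) ^ l.length * χ m a
  | [], a, _ => by simp [List.getLastD_cons]
  | b :: t, a, h => by
    have hab : χ m b = -χ m a := h (a, b) (by simp [List.zip_cons_cons])
    have ih := chi_last m t b (fun p hp => h p (by simp [List.zip_cons_cons]; right; exact hp))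
    simp only [List.getLastD_cons] at *
    rw [ih, hab, List.length_cons, pow_succ]
    ring

end LongestPathAux

open LongestPathAux in
/-- The endpoints of any longest spanning path on an even-sized set of reals lie on
different sides of the median. -/
theorem stmt0 (k : ℕ) (hk : 1 ≤ k) (P : Finset ℝ) (hcard : P.card = 2 * k)
    (H : List ℝ) (hH : IsHamPathOn P H)
    (hmax : ∀ L : List ℝ, IsHamPathOn P L → pathLen L ≤ pathLen H) :
    (H.headI < medianOf P ∧ medianOf P < H.getLastD 0) ∨
    (H.getLastD 0 < medianOf P ∧ medianOf P < H.headI) := by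
  classical
  set s : List ℝ := P.sort (· ≤ ·) with hs_def
  have hs_len : s.length = 2 * k := by rw [hs_def, Finset.length_sort, hcard]
  have hk1 : k - 1 < s.length := by omega
  have hk2 : k < s.length := by omega
  set a : ℝ := s.getD (k - 1) 0 with ha_def
  set b : ℝ := s.getD k 0 with hb_def
  have ha : a = s[k - 1] := List.getD_eq_getElem s 0 hk1
  have hb : b = s[k] := List.getD_eq_getElem s 0 hk2
  have hmed : medianOf P = (a + b) / 2 := by
    unfold medianOf
    rw [hcard]
    have h2 : 2 * k % 2 = 0 := Nat.mul_mod_right 2 k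
    have h3 : 2 * k / 2 = k := by omega
    rw [h2, h3]
    rw [ha_def, hb_def]
    rfl
  set m : ℝ := medianOf P with hm_def
  have hab : a < b := by
    rw [ha, hb]
    exact (Finset.sortedLT_sort P).pairwise.rel_get_of_lt
      (a := ⟨k - 1, hk1⟩) (b := ⟨k, hk2⟩) (by simp; omega)
  have ham : a < m := by rw [hmed]; linarith
  have hmb : m < b := by rw [hmed]; linarith
  set g : ℝ := b - a with hg_def
  have hg : 0 < g := by simp [hg_def]; linarith
  set f : ℝ → ℝ := fun v => |v - m| with hf_def
  -- the two halves
  set bot : List ℝ := s.take k with hbot_def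
  set top : List ℝ := s.drop k with htop_def
  have hbot_len : bot.length = k := by
    rw [hbot_def, List.length_take]; omega
  have htop_len : top.length = k := by
    rw [htop_def, List.length_drop]; omega
  have hsorted : s.Pairwise (· ≤ ·) := Finset.pairwise_sort P _
  have hbot_le : ∀ x ∈ bot, x ≤ a := by
    intro x hx
    rw [hbot_def, List.mem_take_iff_getElem] at hx
    obtain ⟨i, hi, rfl⟩ := hx
    rw [ha]
    exact hsorted.rel_get_of_le (a := ⟨i, by omega⟩) (b := ⟨k - 1, hk1⟩)
      (by simp; omega)
  have htop_ge : ∀ y ∈ top, b ≤ y := by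
    intro y hy
    rw [htop_def, List.mem_drop_iff_getElem] at hy
    obtain ⟨i, hi, rfl⟩ := hy
    rw [hb]
    exact hsorted.rel_get_of_le (a := ⟨k, hk2⟩) (b := ⟨k + i, by omega⟩)
      (by simp)
  have hPside : ∀ v ∈ P, v ≤ a ∨ b ≤ v := by
    intro v hv
    have : v ∈ s := (Finset.mem_sort _).mpr hv
    rw [← List.take_append_drop k s, List.mem_append] at this
    rcases this with h | h
    · exact Or.inl (hbot_le v h)
    · exact Or.inr (htop_ge v h)
  have hf_left : ∀ v, v ≤ a → f v = m - v := by
    intro v hv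
    simp only [hf_def]
    rw [abs_of_nonpos (by linarith)]
    ring
  have hf_right : ∀ v, b ≤ v → f v = v - m := by
    intro v hv
    simp only [hf_def]
    rw [abs_of_nonneg (by linarith)]
  have hf_lb : ∀ v ∈ P, g / 2 ≤ f v := by
    intro v hv
    rcases hPside v hv with h | h
    · rw [hf_left v h]; linarith
    · rw [hf_right v h]; linarith
  -- H basic facts
  obtain ⟨Hnd, HtoF⟩ := hH
  have Hlen : H.length = 2 * k := by
    rw [← List.toFinset_card_of_nodup Hnd, HtoF, hcard]
  have Hne : H ≠ [] := by
    intro h; rw [h] at Hlen; simp at Hlen; omega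
  have HpermS : H.Perm s := by
    refine List.perm_of_nodup_nodup_toFinset_eq Hnd (Finset.sort_nodup P _) ?_
    rw [HtoF, hs_def, Finset.sort_toFinset]
  have Hsum : (H.map f).sum = (s.map f).sum := (HpermS.map f).sum_eq
  -- the alternating comparison path A
  set pairs : List (ℝ × ℝ) := top.zip bot with hpairs_def
  set A : List ℝ := J pairs with hA_def
  have hApairs : ∀ q ∈ pairs, m < q.1 ∧ q.2 < m := by
    intro q hq
    obtain ⟨h1, h2⟩ := List.of_mem_zip hq
    exact ⟨lt_of_lt_of_le hmb (htop_ge _ h1), lt_of_le_of_lt (hbot_le _ h2) ham⟩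
  have hApermS : A.Perm s := by
    have h1 := J_perm pairs
    rw [hpairs_def, List.map_fst_zip (l₁ := top) (l₂ := bot) (by omega),
      List.map_snd_zip (l₁ := top) (l₂ := bot) (by omega)] at h1
    refine h1.trans (List.perm_append_comm.trans ?_)
    rw [hbot_def, htop_def, List.take_append_drop]
  have hAham : IsHamPathOn P A := by
    constructor
    · exact hApermS.nodup_iff.mpr (Finset.sort_nodup P _)
    · rw [List.toFinset_eq_of_perm _ _ hApermS, hs_def, Finset.sort_toFinset]
  -- structure of top and bot as cons
  obtain ⟨t0, topT, htopc⟩ : ∃ x l, top = x :: l := by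
    cases htc : top with
    | nil => rw [htc] at htop_len; simp at htop_len; omega
    | cons x l => exact ⟨x, l, rfl⟩
  obtain ⟨b0, botT, hbotc⟩ : ∃ x l, bot = x :: l := by
    cases hbc : bot with
    | nil => rw [hbc] at hbot_len; simp at hbot_len; omega
    | cons x l => exact ⟨x, l, rfl⟩
  have hAhead : A.headI = top.headI := by
    rw [hA_def, hpairs_def, htopc, hbotc, J_headI]; simp
  have htophead : top.headI = b := by
    have hdrop : top = s[k] :: s.drop (k + 1) := by
      rw [htop_def]; exact List.drop_eq_getElem_cons hk2
    rw [hdrop, hb]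
    rfl
  have hAlast : A.getLastD 0 = bot.getLastD 0 := by
    have hlen : topT.length = botT.length := by
      have h1 := htop_len; have h2 := hbot_len
      rw [htopc] at h1; rw [hbotc] at h2
      simp at h1 h2; omega
    rw [hA_def, hpairs_def, htopc, hbotc, List.zip_cons_cons, J_getLastD,
      ← List.zip_cons_cons, zip_getLastD t0 b0 topT botT hlen]
  have hbotlast : bot.getLastD 0 = a := by
    rw [List.getLastD_eq_getLast?, List.getLast?_eq_getElem?, hbot_len, hbot_def,
      List.getElem?_take]
    have : (k - 1) < k := by omega
    rw [if_pos this, List.getElem?_eq_getElem hk1, ha]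
    simp
  -- pathLen A
  have hAcross : ∀ p ∈ A.zip A.tail, |p.1 - p.2| = f p.1 + f p.2 := by
    intro p hp
    rcases J_chain m pairs hApairs p hp with ⟨h1, h2⟩ | ⟨h1, h2⟩
    · rw [hf_def]; simp only
      rw [abs_of_pos (by linarith), abs_of_pos (by linarith),
        abs_of_neg (by linarith)]
      ring
    · rw [hf_def]; simp only
      rw [abs_of_neg (by linarith), abs_of_neg (by linarith),
        abs_of_pos (by linarith)]
      ring
  have hAne : A ≠ [] := by
    rw [hA_def, hpairs_def, htopc, hbotc, List.zip_cons_cons]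
    simp [J]
  have hAlen_val : pathLen A = 2 * (s.map f).sum - g := by
    have h1 : pathLen A = ((A.zip A.tail).map fun p => f p.1 + f p.2).sum := by
      unfold pathLen
      exact congrArg _ (List.map_congr_left hAcross)
    rw [h1, edgeSum_eq f A hAne, hAhead, htophead, hAlast, hbotlast,
      (hApermS.map f).sum_eq]
    have hfb : f b = g / 2 := by
      rw [hf_def]; simp only
      rw [abs_of_pos (by linarith), hmed, hg_def]; ring
    have hfa : f a = g / 2 := by
      rw [hf_def]; simp only
      rw [abs_of_neg (by linarith), hmed, hg_def]; ring
    rw [hfa, hfb]; ring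
  -- endpoints of H
  obtain ⟨h0, Ht, rfl⟩ : ∃ x l, H = x :: l := by
    cases hc : H with
    | nil => exact absurd hc Hne
    | cons x l => exact ⟨x, l, rfl⟩
  set e1 : ℝ := (h0 :: Ht).headI with he1
  set e2 : ℝ := (h0 :: Ht).getLastD 0 with he2
  have he1P : e1 ∈ P := by
    rw [← HtoF]; simp [he1]
  have he2P : e2 ∈ P := by
    rw [← HtoF, List.mem_toFinset, he2, List.getLastD_cons]
    exact List.getLastD_mem_cons (l := Ht) (a := h0)
  have hf1 : g / 2 ≤ f e1 := hf_lb e1 he1P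
  have hf2 : g / 2 ≤ f e2 := hf_lb e2 he2P
  -- main case split
  rcases hPside e1 he1P with h1 | h1 <;> rcases hPside e2 he2P with h2 | h2
  case inl.inr =>
    left; exact ⟨by linarith, by linarith⟩
  case inr.inl =>
    right; exact ⟨by linarith, by linarith⟩
  all_goals {
  exfalso
  -- same-side endpoints: find a same-side adjacent pair by parity
  have hsame : ∃ p ∈ (h0 :: Ht).zip Ht, χ m p.1 = χ m p.2 := by
    by_contra hno
    push_neg at hno
    have halt : ∀ p ∈ (h0 :: Ht).zip Ht, χ m p.2 = -χ m p.1 := by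
      intro p hp
      have hne := hno p hp
      rcases chi_cases m p.1 with h1 | h1 <;> rcases chi_cases m p.2 with h2 | h2 <;>
        rw [h1, h2] at hne ⊢ <;> first | exact absurd rfl hne | norm_num
    have hlast := chi_last m Ht h0 halt
    have hTlen : Ht.length = 2 * k - 1 := by
      have := Hlen; simp at this; omega
    have hodd : Odd Ht.length := by rw [hTlen]; exact ⟨k - 1, by omega⟩
    rw [hodd.neg_one_pow] at hlast
    have hee : χ m e1 = χ m e2 := by
      simp only [χ]
      split <;> split <;> first | rfl | linarith
    have he1h : χ m e1 = χ m h0 := by rw [he1]; simp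
    have hlast' : χ m e2 = -1 * χ m h0 := by rw [he2]; exact hlast
    have := chi_ne_zero m h0
    rw [he1h] at hee
    rw [hlast'] at hee
    have : χ m h0 = 0 := by linarith
    exact chi_ne_zero m h0 this
  obtain ⟨⟨x, y⟩, hpmem, hpeq⟩ := hsame
  obtain ⟨hxH, hyH⟩ := List.of_mem_zip hpmem
  have hxP : x ∈ P := by rw [← HtoF]; simpa using hxH
  have hyP : y ∈ P := by
    rw [← HtoF]; simp only [List.mem_toFinset]; exact List.mem_cons_of_mem h0 hyH
  have hcase : (x ≤ a ∧ y ≤ a) ∨ (b ≤ x ∧ b ≤ y) := by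
    rcases hPside x hxP with hx | hx <;> rcases hPside y hyP with hy | hy
    · exact Or.inl ⟨hx, hy⟩
    · exfalso; simp only [χ] at hpeq
      rw [if_neg (by simp; linarith), if_pos (by linarith)] at hpeq; norm_num at hpeq
    · exfalso; simp only [χ] at hpeq
      rw [if_pos (by linarith), if_neg (by simp; linarith)] at hpeq; norm_num at hpeq
    · exact Or.inr ⟨hx, hy⟩
  have hspecial : |x - y| ≤ f x + f y - g := by
    rcases hcase with ⟨hx, hy⟩ | ⟨hx, hy⟩
    · rw [hf_left x hx, hf_left y hy, abs_le]
      constructor <;> linarith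
    · rw [hf_right x hx, hf_right y hy, abs_le]
      constructor <;> linarith
  have hall : ∀ p ∈ (h0 :: Ht).zip Ht, |p.1 - p.2| ≤ f p.1 + f p.2 := by
    intro p _
    calc |p.1 - p.2| ≤ |p.1 - m| + |m - p.2| := abs_sub_le _ _ _
    _ = f p.1 + f p.2 := by rw [abs_sub_comm m p.2]
  have hHbound : pathLen (h0 :: Ht) ≤
      (((h0 :: Ht).zip Ht).map fun p => f p.1 + f p.2).sum - g := by
    unfold pathLen
    simp only [List.tail_cons]
    exact sum_sub_of_mem _ hall (x, y) hpmem hspecial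
  have hedge : (((h0 :: Ht).zip Ht).map fun p => f p.1 + f p.2).sum
      = 2 * ((h0 :: Ht).map f).sum - f e1 - f e2 := by
    have := edgeSum_eq f (h0 :: Ht) (by simp)
    rw [he1, he2]; simpa using this
  have hAle := hmax A hAham
  rw [hAlen_val] at hAle
  rw [hedge, Hsum] at hHbound
  linarith
  }
end

section
/- Let P be a set of an even number n = 2k of distinct real numbers with median m (the mean of the k-th and (k+1)-st smallest elements), and let H be a Hamiltonian path on P. Then H has maximum total length among all Hamiltonian paths on P if and only if (i) every edge of H, viewed as a closed interval between its endpoints, contains m, and (ii) the two endpoints of H are the k-th and (k+1)-st smallest elements of P (the two elements closest to the median). -/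
namespace Stmt1Aux

def il : List ℝ → List ℝ → List ℝ
  | [], r => r
  | x :: xs, r => x :: il r xs
termination_by l r => l.length + r.length

@[simp] lemma il_nil (r : List ℝ) : il [] r = r := by rw [il]

@[simp] lemma il_cons (x : ℝ) (xs r : List ℝ) : il (x :: xs) r = x :: il r xs := by rw [il]

lemma il_perm (l r : List ℝ) : (il l r).Perm (l ++ r) := by
  induction l, r using il.induct with
  | case1 r => simp
  | case2 x xs r IH =>
    simp only [il_cons, List.cons_append]
    exact (IH.trans List.perm_append_comm).cons x

lemma il_edges (m : ℝ) : ∀ (l r : List ℝ), l.length = r.length →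
    (∀ x ∈ l, x ≤ m) → (∀ y ∈ r, m ≤ y) →
    ∀ e ∈ (il l r).zip (il l r).tail, min e.1 e.2 ≤ m ∧ m ≤ max e.1 e.2 := by
  intro l
  induction l with
  | nil =>
    rintro (_ | ⟨y, ys⟩) hlen _ _
    · simp
    · simp at hlen
  | cons x xs IH =>
    rintro (_ | ⟨y, ys⟩) hlen hl hr e he
    · simp at hlen
    · have hxm : x ≤ m := hl x (by simp)
      have hym : m ≤ y := hr y (by simp)
      match xs, ys, hlen with
      | [], [], _ =>
        simp only [il_cons, il_nil, List.zip_cons_cons, List.tail_cons, List.zip_nil_right,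
          List.mem_singleton] at he
        subst he
        exact ⟨(min_le_left x y).trans hxm, hym.trans (le_max_right x y)⟩
      | x' :: xs', y' :: ys', hlen =>
        have hx'm : x' ≤ m := hl x' (by simp)
        simp only [il_cons, List.zip_cons_cons, List.tail_cons, List.mem_cons] at he
        rcases he with rfl | rfl | he
        · exact ⟨(min_le_left x y).trans hxm, hym.trans (le_max_right x y)⟩
        · exact ⟨(min_le_right y x').trans hx'm, hym.trans (le_max_left y x')⟩
        · have := IH (y' :: ys') (by simpa using hlen)
            (fun z hz => hl z (List.mem_cons_of_mem _ hz))
            (fun z hz => hr z (List.mem_cons_of_mem _ hz)) e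
          simp only [il_cons, List.zip_cons_cons, List.tail_cons, List.mem_cons] at this
          exact this (by tauto)

lemma il_getLast? : ∀ (l r : List ℝ), l.length = r.length → r ≠ [] →
    (il l r).getLast? = r.getLast? := by
  intro l
  induction l with
  | nil => rintro (_ | ⟨y, ys⟩) hlen hne <;> simp_all
  | cons x xs IH =>
    rintro (_ | ⟨y, ys⟩) hlen hne
    · simp at hlen
    · match xs, ys, hlen with
      | [], [], _ => simp
      | x' :: xs', y' :: ys', hlen =>
        have h1 : (il (x :: x' :: xs') (y :: y' :: ys')) = x :: y :: il (x' :: xs') (y' :: ys') := by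
          simp
        rw [h1, List.getLast?_cons_cons, List.getLast?_cons_cons]
        have h2 : il (x' :: xs') (y' :: ys') = x' :: il (y' :: ys') xs' := by simp
        rw [h2, List.getLast?_cons_cons, ← h2]
        exact IH (y' :: ys') (by simpa using hlen) (by simp)


lemma edge_eq_iff (m x y : ℝ) :
    |x - y| = |x - m| + |y - m| ↔ (min x y ≤ m ∧ m ≤ max x y) := by
  constructor
  · intro h
    by_contra hc
    rcases not_and_or.1 hc with hc | hc
    · push_neg at hc
      rcases lt_min_iff.1 hc with ⟨hx, hy⟩
      have e1 : |x - m| = x - m := abs_of_nonneg (by linarith)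
      have e2 : |y - m| = y - m := abs_of_nonneg (by linarith)
      rw [e1, e2] at h
      rcases le_total x y with h3 | h3
      · rw [abs_of_nonpos (by linarith)] at h; linarith
      · rw [abs_of_nonneg (by linarith)] at h; linarith
    · push_neg at hc
      rcases max_lt_iff.1 hc with ⟨hx, hy⟩
      have e1 : |x - m| = -(x - m) := abs_of_nonpos (by linarith)
      have e2 : |y - m| = -(y - m) := abs_of_nonpos (by linarith)
      rw [e1, e2] at h
      rcases le_total x y with h3 | h3
      · rw [abs_of_nonpos (by linarith)] at h; linarith
      · rw [abs_of_nonneg (by linarith)] at h; linarith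
  · rintro ⟨hmin, hmax⟩
    rcases le_total x y with h3 | h3
    · rw [min_eq_left h3] at hmin; rw [max_eq_right h3] at hmax
      have e1 : |x - m| = -(x - m) := abs_of_nonpos (by linarith)
      have e2 : |y - m| = y - m := abs_of_nonneg (by linarith)
      rw [e1, e2, abs_of_nonpos (by linarith : x - y ≤ 0)]
      ring
    · rw [min_eq_right h3] at hmin; rw [max_eq_left h3] at hmax
      have e1 : |x - m| = x - m := abs_of_nonneg (by linarith)
      have e2 : |y - m| = -(y - m) := abs_of_nonpos (by linarith)
      rw [e1, e2, abs_of_nonneg (by linarith : 0 ≤ x - y)]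
      ring


lemma edge_le (m x y : ℝ) : |x - y| ≤ |x - m| + |y - m| := by
  calc |x - y| ≤ |x - m| + |m - y| := abs_sub_le x m y
  _ = |x - m| + |y - m| := by rw [abs_sub_comm m y]

lemma getLastD_eq_getLast' {l : List ℝ} (h : l ≠ []) : l.getLastD 0 = l.getLast h := by
  cases l with
  | nil => tauto
  | cons x t => rw [List.getLast_eq_getLastD, List.getLastD_cons]

lemma zipSum (f : ℝ → ℝ) : ∀ (L : List ℝ), L ≠ [] →
    ((L.zip L.tail).map (fun p => f p.1 + f p.2)).sum
      = 2 * (L.map f).sum - f L.headI - f (L.getLastD 0) := by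
  intro L
  induction L with
  | nil => simp
  | cons x t IH =>
    cases t with
    | nil => intro _; simp [List.getLastD]; ring
    | cons y t' =>
      intro _
      have h := IH (by simp)
      simp only [List.zip_cons_cons, List.tail_cons, List.map_cons, List.sum_cons,
        List.headI] at h ⊢
      rw [show (x :: y :: t').getLastD 0 = t'.getLastD y from by
            rw [List.getLastD_cons, List.getLastD_cons],
          show (y :: t').getLastD 0 = t'.getLastD y from List.getLastD_cons] at *
      rw [h]
      ring

lemma sum_eq_pointwise {α : Type*} (l : List α) (g1 g2 : α → ℝ)
    (hle : ∀ x ∈ l, g1 x ≤ g2 x) (hsum : (l.map g1).sum = (l.map g2).sum) :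
    ∀ x ∈ l, g1 x = g2 x := by
  induction l with
  | nil => simp
  | cons x t IH =>
    have h1 : g1 x ≤ g2 x := hle x (by simp)
    have h2 : (t.map g1).sum ≤ (t.map g2).sum :=
      List.sum_le_sum (fun i hi => hle i (List.mem_cons_of_mem _ hi))
    simp only [List.map_cons, List.sum_cons] at hsum
    have hx : g1 x = g2 x := by linarith
    have ht := IH (fun i hi => hle i (List.mem_cons_of_mem _ hi)) (by linarith)
    rintro z hz
    rcases List.mem_cons.1 hz with rfl | hz
    · exact hx
    · exact ht z hz

lemma headI_mem' {l : List ℝ} (h : l ≠ []) : l.headI ∈ l := by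
  cases l with
  | nil => tauto
  | cons x t => simp

lemma core (P : Finset ℝ) (a b m M : ℝ)
    (hstrict : ∀ v ∈ P, v ≠ a → v ≠ b → |a - m| < |v - m|)
    (hab : |a - m| = |b - m|)
    (hne : a ≠ b)
    (hM : M = 2 * (∑ v ∈ P, |v - m|) - |a - m| - |b - m|)
    (hP2 : 2 ≤ P.card)
    (L : List ℝ) (hL : IsHamPathOn P L) :
    pathLen L ≤ M ∧ (pathLen L = M ↔
      ((∀ e ∈ L.zip L.tail, min e.1 e.2 ≤ m ∧ m ≤ max e.1 e.2) ∧
        ((L.headI = a ∧ L.getLastD 0 = b) ∨ (L.headI = b ∧ L.getLastD 0 = a)))) := by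
  obtain ⟨hnd, htf⟩ := hL
  have hlen : L.length = P.card := by rw [← htf, List.toFinset_card_of_nodup hnd]
  have hLne : L ≠ [] := by
    intro h
    rw [h] at hlen
    simp at hlen
    omega
  have hsum : (L.map (fun v => |v - m|)).sum = ∑ v ∈ P, |v - m| := by
    rw [← htf, List.sum_toFinset _ hnd]
  have hdmem : L.headI ∈ P := by
    rw [← htf]; exact List.mem_toFinset.2 (headI_mem' hLne)
  have hlmem : L.getLastD 0 ∈ P := by
    rw [← htf]
    exact List.mem_toFinset.2 (getLastD_eq_getLast' hLne ▸ List.getLast_mem hLne)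
  have hdlne : L.headI ≠ L.getLastD 0 := by
    obtain ⟨x, t, rfl⟩ := List.exists_cons_of_ne_nil hLne
    have htne : t ≠ [] := by
      intro h; rw [h] at hlen; simp at hlen; omega
    have h1 : (x :: t).headI = x := rfl
    have h2 : (x :: t).getLastD 0 = t.getLast htne := by
      rw [getLastD_eq_getLast' (by simp), List.getLast_cons htne]
    rw [h1, h2]
    intro h
    exact (List.nodup_cons.1 hnd).1 (h ▸ List.getLast_mem htne)
  -- bound through E
  have hE1 : pathLen L ≤ ((L.zip L.tail).map (fun p => |p.1 - m| + |p.2 - m|)).sum :=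
    List.sum_le_sum (fun p _ => edge_le m p.1 p.2)
  have hE2 : ((L.zip L.tail).map (fun p => |p.1 - m| + |p.2 - m|)).sum
      = 2 * (∑ v ∈ P, |v - m|) - |L.headI - m| - |L.getLastD 0 - m| := by
    have h := zipSum (fun v => |v - m|) L hLne
    rw [h, hsum]
  have hge : ∀ v ∈ P, |a - m| ≤ |v - m| := by
    intro v hv
    by_cases hva : v = a
    · exact hva ▸ le_refl _
    by_cases hvb : v = b
    · exact hvb ▸ hab.le
    · exact (hstrict v hv hva hvb).le
  have hkey : ∀ u v, u ∈ P → v ∈ P → u ≠ v →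
      ¬((u = a ∧ v = b) ∨ (u = b ∧ v = a)) → |a - m| + |b - m| < |u - m| + |v - m| := by
    intro u v hu hv huv hnot
    push_neg at hnot
    by_cases hua : u = a
    · have hvb : v ≠ b := hnot.1 hua
      have hva : v ≠ a := fun h => huv (hua.trans h.symm)
      have := hstrict v hv hva hvb
      rw [hua]
      linarith
    by_cases hub : u = b
    · have hva : v ≠ a := hnot.2 hub
      have hvb : v ≠ b := fun h => huv (hub.trans h.symm)
      have := hstrict v hv hva hvb
      rw [hub]
      linarith
    · have h1 := hstrict u hu hua hub
      have h2 := hge v hv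
      linarith
  have hfge : |a - m| + |b - m| ≤ |L.headI - m| + |L.getLastD 0 - m| := by
    by_cases hcond : (L.headI = a ∧ L.getLastD 0 = b) ∨ (L.headI = b ∧ L.getLastD 0 = a)
    · rcases hcond with ⟨h1, h2⟩ | ⟨h1, h2⟩
      · rw [h1, h2]
      · rw [h1, h2]; linarith
    · exact (hkey _ _ hdmem hlmem hdlne hcond).le
  have hbound : pathLen L ≤ M := by rw [hM]; linarith
  refine ⟨hbound, ?_, ?_⟩
  · intro heq
    have hEeq : ((L.zip L.tail).map (fun p => |p.1 - m| + |p.2 - m|)).sum = M := by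
      have h2 : ((L.zip L.tail).map (fun p => |p.1 - m| + |p.2 - m|)).sum ≤ M := by
        rw [hM]; linarith
      linarith [heq ▸ hE1]
    have hends : |L.headI - m| + |L.getLastD 0 - m| = |a - m| + |b - m| := by
      rw [hEeq, hM] at hE2
      linarith
    have hendp : (L.headI = a ∧ L.getLastD 0 = b) ∨ (L.headI = b ∧ L.getLastD 0 = a) := by
      by_contra hnot
      exact absurd hends (ne_of_gt (by linarith [hkey _ _ hdmem hlmem hdlne hnot]))
    refine ⟨?_, hendp⟩
    have hpe : pathLen L = ((L.zip L.tail).map (fun p => |p.1 - m| + |p.2 - m|)).sum := by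
      rw [heq, hEeq]
    have hpw := sum_eq_pointwise (L.zip L.tail) (fun p => |p.1 - p.2|)
      (fun p => |p.1 - m| + |p.2 - m|) (fun p _ => edge_le m p.1 p.2) hpe
    intro e he
    exact (edge_eq_iff m e.1 e.2).1 (hpw e he)
  · rintro ⟨hedges, hendp⟩
    have hpe : pathLen L = ((L.zip L.tail).map (fun p => |p.1 - m| + |p.2 - m|)).sum := by
      unfold pathLen
      congr 1
      exact List.map_congr_left (fun e he => (edge_eq_iff m e.1 e.2).2 (hedges e he))
    rw [hpe, hE2, hM]
    rcases hendp with ⟨h1, h2⟩ | ⟨h1, h2⟩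
    · rw [h1, h2]
    · rw [h1, h2]; linarith

end Stmt1Aux

open Stmt1Aux in
/-- Characterization of longest Hamiltonian paths on an even-sized set of distinct
reals: a Hamiltonian path is longest iff every edge contains the median and the
endpoints are the two elements closest to the median (the k-th and (k+1)-st
smallest). -/
theorem stmt1 (k : ℕ) (hk : 1 ≤ k) (P : Finset ℝ) (hcard : P.card = 2 * k)
    (H : List ℝ) (hH : IsHamPathOn P H) :
    letI s := P.sort (· ≤ ·)
    letI a := s.getD (k - 1) 0   -- the k-th smallest element
    letI b := s.getD k 0         -- the (k+1)-st smallest element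
    letI m := (a + b) / 2        -- the median
    ((∀ L : List ℝ, IsHamPathOn P L → pathLen L ≤ pathLen H) ↔
      ((∀ e ∈ H.zip H.tail, min e.1 e.2 ≤ m ∧ m ≤ max e.1 e.2) ∧
        ((H.headI = a ∧ H.getLastD 0 = b) ∨ (H.headI = b ∧ H.getLastD 0 = a)))) := by
  set s := P.sort (· ≤ ·) with hs
  set a := s.getD (k - 1) 0 with ha0
  set b := s.getD k 0 with hb0
  set m := (a + b) / 2 with hm
  have hslen : s.length = 2 * k := by rw [hs, Finset.length_sort]; exact hcard
  have hk1 : k - 1 < s.length := by omega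
  have hkk : k < s.length := by omega
  have hnodup : s.Nodup := Finset.sort_nodup _ _
  have hpw : ∀ i j (_ : i < s.length) (_ : j < s.length), i < j → s[i] < s[j] :=
    List.pairwise_iff_getElem.1 (List.sortedLT_iff_pairwise.1 (Finset.sortedLT_sort P))
  have ha : a = s[k - 1] := by rw [ha0, List.getD_eq_getElem s 0 hk1]
  have hb : b = s[k] := by rw [hb0, List.getD_eq_getElem s 0 hkk]
  have hab_lt : a < b := by rw [ha, hb]; exact hpw (k - 1) k hk1 hkk (by omega)
  have ham : a ≤ m := by rw [hm]; linarith
  have hmb : m ≤ b := by rw [hm]; linarith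
  have hfa : |a - m| = (b - a) / 2 := by
    rw [abs_of_nonpos (by linarith), hm]; ring
  have hfb : |b - m| = (b - a) / 2 := by
    rw [abs_of_nonneg (by linarith), hm]; ring
  have hab : |a - m| = |b - m| := by rw [hfa, hfb]
  have haP : a ∈ P := (Finset.mem_sort _).1 (ha ▸ List.getElem_mem hk1)
  have hbP : b ∈ P := (Finset.mem_sort _).1 (hb ▸ List.getElem_mem hkk)
  have hneab : a ≠ b := ne_of_lt hab_lt
  have hstrict : ∀ v ∈ P, v ≠ a → v ≠ b → |a - m| < |v - m| := by
    intro v hv hva hvb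
    have hvs : v ∈ s := (Finset.mem_sort _).2 hv
    obtain ⟨i, hi, rfl⟩ := List.mem_iff_getElem.1 hvs
    have hik1 : i ≠ k - 1 := fun h => hva (by rw [ha]; congr 1)
    have hik : i ≠ k := fun h => hvb (by rw [hb]; congr 1)
    rcases (by omega : i < k - 1 ∨ k < i) with hlt | hlt
    · have h1 : s[i] < a := ha ▸ hpw i (k - 1) hi hk1 hlt
      have h2 : m - s[i] ≤ |s[i] - m| := by rw [abs_sub_comm]; exact le_abs_self _
      rw [hfa]; rw [hm] at h2 ⊢; linarith
    · have h1 : b < s[i] := hb ▸ hpw k i hkk hi hlt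
      have h2 : s[i] - m ≤ |s[i] - m| := le_abs_self _
      rw [hfa]; rw [hm] at h2 ⊢; linarith
  have hcore := core P a b m (2 * (∑ v ∈ P, |v - m|) - |a - m| - |b - m|) hstrict hab hneab rfl
    (by omega)
  -- construction of an optimal path
  set t1 := s.take (k - 1) with ht1
  set t2 := s.drop (k + 1) with ht2
  have ht1len : t1.length = k - 1 := by rw [ht1, List.length_take]; omega
  have ht2len : t2.length = k - 1 := by rw [ht2, List.length_drop]; omega
  have hsplit : s = t1 ++ a :: b :: t2 := by
    conv_lhs => rw [← List.take_append_drop (k - 1) s]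
    rw [List.drop_eq_getElem_cons hk1, show k - 1 + 1 = k from by omega,
      List.drop_eq_getElem_cons hkk, ← ha, ← hb]
  set lows := a :: t1 with hlows
  set highs := t2 ++ [b] with hhighs
  have hlenlh : lows.length = highs.length := by
    rw [hlows, hhighs]; simp [ht1len, ht2len]
  set L0 := il lows highs with hL0
  have hperm : L0.Perm s := by
    refine (il_perm lows highs).trans ?_
    rw [hsplit, hlows, hhighs]
    have p1 : (t1 ++ (t2 ++ [b])).Perm (t1 ++ (b :: t2)) :=
      (List.perm_append_singleton b t2).append_left t1
    exact (p1.cons a).trans List.perm_middle.symm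
  have hamL0 : IsHamPathOn P L0 := by
    refine ⟨hperm.nodup_iff.2 hnodup, ?_⟩
    have h3 : L0.toFinset = s.toFinset := by
      ext x
      simp only [List.mem_toFinset, hperm.mem_iff]
    rw [h3, hs]
    exact Finset.sort_toFinset _ _
  have hlowle : ∀ x ∈ lows, x ≤ m := by
    rintro x hx
    rcases List.mem_cons.1 hx with rfl | hx
    · exact ham
    · obtain ⟨i, hi, rfl⟩ := List.mem_iff_getElem.1 hx
      have : t1[i] = s[i] := List.getElem_take
      rw [this]
      have : s[i] < a := ha ▸ hpw i (k - 1) (by omega) hk1 (by omega)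
      linarith
  have hhighge : ∀ y ∈ highs, m ≤ y := by
    rintro y hy
    rcases List.mem_append.1 hy with hy | hy
    · obtain ⟨i, hi, rfl⟩ := List.mem_iff_getElem.1 hy
      have : t2[i] = s[k + 1 + i] := List.getElem_drop
      rw [this]
      have : b < s[k + 1 + i] := hb ▸ hpw k (k + 1 + i) hkk (by omega) (by omega)
      linarith
    · rw [List.mem_singleton.1 hy]; exact hmb
  have hedges0 := il_edges m lows highs hlenlh hlowle hhighge
  have hhead0 : L0.headI = a := by rw [hL0, hlows, il_cons]; rfl
  have hlast0 : L0.getLastD 0 = b := by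
    rw [List.getLastD_eq_getLast?, il_getLast? lows highs hlenlh (by rw [hhighs]; simp),
      hhighs, List.getLast?_concat]
    rfl
  have hL0len : pathLen L0 = 2 * (∑ v ∈ P, |v - m|) - |a - m| - |b - m| :=
    (hcore L0 hamL0).2.mpr ⟨hedges0, Or.inl ⟨hhead0, hlast0⟩⟩
  constructor
  · intro hmax
    refine (hcore H hH).2.mp ?_
    have h1 : pathLen H ≤ 2 * (∑ v ∈ P, |v - m|) - |a - m| - |b - m| := (hcore H hH).1
    have h2 : pathLen L0 ≤ pathLen H := hmax L0 hamL0
    linarith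
  · intro hcond L hLham
    have hHM : pathLen H = 2 * (∑ v ∈ P, |v - m|) - |a - m| - |b - m| :=
      (hcore H hH).2.mpr hcond
    linarith [(hcore L hLham).1]
end

section
/- Let P be a finite set of distinct real numbers with |P| ≥ 3, and let C be a Hamiltonian cycle on P. Then C has maximum total length among all Hamiltonian cycles on P if and only if every edge of C, viewed as a closed interval between its endpoints, contains the median of P. -/
/-- Length of a Hamiltonian cycle through a list of reals: sum of absolute
differences over consecutive pairs, including the wrap-around pair. -/
noncomputable def cycleLen (l : List ℝ) : ℝ :=
  ((l.zip (l.rotate 1)).map fun p => |p.1 - p.2|).sum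

/-- A Hamiltonian cycle on a finite set `P ⊆ ℝ`, given as a list (cyclic ordering)
visiting each element exactly once. -/
def IsHamCycleOn (P : Finset ℝ) (l : List ℝ) : Prop :=
  l.Nodup ∧ l.toFinset = P

/-! ### Auxiliary lemmas -/

lemma myabs_le (a b m : ℝ) : |a - b| ≤ |a - m| + |b - m| := by
  calc |a - b| = |(a - m) - (b - m)| := by ring_nf
  _ ≤ |a - m| + |b - m| := abs_sub _ _

lemma myabs_eq_iff (a b m : ℝ) :
    |a - b| = |a - m| + |b - m| ↔ (min a b ≤ m ∧ m ≤ max a b) := by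
  rcases abs_cases (a - b) with ⟨e3, s3⟩ | ⟨e3, s3⟩ <;>
  rcases abs_cases (a - m) with ⟨e1, s1⟩ | ⟨e1, s1⟩ <;>
  rcases abs_cases (b - m) with ⟨e2, s2⟩ | ⟨e2, s2⟩ <;>
  rw [e1, e2, e3, min_def, max_def] <;> split_ifs <;>
  constructor <;> intro h <;> (try obtain ⟨h4, h5⟩ := h) <;>
  first | exact ⟨by linarith, by linarith⟩ | linarith

lemma sum_eq_forces {α : Type*} (f g : α → ℝ) :
    ∀ (l : List α), (∀ x ∈ l, f x ≤ g x) → (l.map g).sum ≤ (l.map f).sum →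
      ∀ x ∈ l, f x = g x := by
  intro l
  induction l with
  | nil => simp
  | cons a t ih =>
    intro hle hsum x hx
    have h1 : f a ≤ g a := hle a (List.mem_cons_self)
    have h2 : ∀ y ∈ t, f y ≤ g y := fun y hy => hle y (List.mem_cons_of_mem _ hy)
    have h3 : (t.map f).sum ≤ (t.map g).sum := List.sum_le_sum h2
    simp only [List.map_cons, List.sum_cons] at hsum
    rcases List.mem_cons.mp hx with rfl | hx
    · linarith
    · exact ih h2 (by linarith) x hx

lemma sum_split (m : ℝ) (L : List ℝ) :
    ((L.zip (L.rotate 1)).map fun p => |p.1 - m| + |p.2 - m|).sum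
      = 2 * (L.map fun x => |x - m|).sum := by
  have hlen : L.length ≤ (L.rotate 1).length := by rw [List.length_rotate]
  have hlen2 : (L.rotate 1).length ≤ L.length := by rw [List.length_rotate]
  have h1 : ((L.zip (L.rotate 1)).map fun p => |p.1 - m|).sum
      = (L.map fun x => |x - m|).sum := by
    rw [show ((L.zip (L.rotate 1)).map fun p => |p.1 - m|)
        = (List.map Prod.fst (L.zip (L.rotate 1))).map fun x => |x - m| by
      rw [List.map_map]; rfl, List.map_fst_zip hlen]
  have h2 : ((L.zip (L.rotate 1)).map fun p => |p.2 - m|).sum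
      = (L.map fun x => |x - m|).sum := by
    rw [show ((L.zip (L.rotate 1)).map fun p => |p.2 - m|)
        = (List.map Prod.snd (L.zip (L.rotate 1))).map fun x => |x - m| by
      rw [List.map_map]; rfl, List.map_snd_zip hlen2]
    exact List.Perm.sum_eq (List.Perm.map _ (List.rotate_perm L 1))
  calc ((L.zip (L.rotate 1)).map fun p => |p.1 - m| + |p.2 - m|).sum
      = ((L.zip (L.rotate 1)).map fun p => |p.1 - m|).sum
        + ((L.zip (L.rotate 1)).map fun p => |p.2 - m|).sum := by
        rw [← List.sum_map_add]
    _ = 2 * (L.map fun x => |x - m|).sum := by rw [h1, h2]; ring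

/-- The key bound: any cycle has length at most `2 * Σ |x - m|`, with equality iff
every edge contains `m`. -/
lemma key (m : ℝ) (L : List ℝ) :
    cycleLen L ≤ 2 * (L.map fun x => |x - m|).sum ∧
    (cycleLen L = 2 * (L.map fun x => |x - m|).sum ↔
      ∀ e ∈ L.zip (L.rotate 1), min e.1 e.2 ≤ m ∧ m ≤ max e.1 e.2) := by
  have hle : ∀ p ∈ L.zip (L.rotate 1), |p.1 - p.2| ≤ |p.1 - m| + |p.2 - m| :=
    fun p _ => myabs_le p.1 p.2 m
  have hub : cycleLen L ≤ 2 * (L.map fun x => |x - m|).sum := by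
    rw [cycleLen, ← sum_split m L]
    exact List.sum_le_sum hle
  refine ⟨hub, ?_, ?_⟩
  · intro heq e he
    rw [← myabs_eq_iff e.1 e.2 m]
    refine sum_eq_forces _ _ _ hle ?_ e he
    rw [← cycleLen, heq, ← sum_split m L]
  · intro hall
    rw [cycleLen, ← sum_split m L]
    congr 1
    exact List.map_congr_left fun e he =>
      (myabs_eq_iff e.1 e.2 m).mpr (hall e he)

/-! ### Interleaving construction -/

def ilv : List ℝ → List ℝ → List ℝ
  | x :: xs, y :: ys => x :: y :: ilv xs ys
  | _, _ => []

lemma ilv_perm : ∀ (a b : List ℝ), a.length = b.length → (ilv a b).Perm (a ++ b) := by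
  intro a
  induction a with
  | nil =>
    intro b hb
    obtain rfl : b = [] := List.eq_nil_of_length_eq_zero (by simpa using hb.symm)
    exact List.Perm.refl _
  | cons x xs ih =>
    intro b hb
    cases b with
    | nil => simp at hb
    | cons y ys =>
      simp only [List.length_cons, Nat.succ_inj] at hb
      show (x :: y :: ilv xs ys).Perm ((x :: xs) ++ (y :: ys))
      refine (((ih ys hb).cons y).cons x).trans ?_
      exact (List.Perm.cons x List.perm_middle.symm)

def Rm (m : ℝ) (u v : ℝ) : Prop := min u v ≤ m ∧ m ≤ max u v

lemma Rm_of {m u v : ℝ} (h1 : u ≤ m) (h2 : m ≤ v) : Rm m u v ∧ Rm m v u :=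
  ⟨⟨(min_le_left u v).trans h1, h2.trans (le_max_right u v)⟩,
   ⟨(min_le_right v u).trans h1, h2.trans (le_max_left v u)⟩⟩

lemma ilv_chain (m : ℝ) : ∀ (a b : List ℝ), a.length = b.length →
    (∀ x ∈ a, x ≤ m) → (∀ y ∈ b, m ≤ y) →
    List.Chain' (Rm m) (ilv a b) ∧ ∀ z, m ≤ z → List.Chain' (Rm m) (z :: ilv a b) := by
  intro a
  induction a with
  | nil =>
    intro b hb _ _
    obtain rfl : b = [] := List.eq_nil_of_length_eq_zero (by simpa using hb.symm)
    exact ⟨List.isChain_nil, fun z _ => List.isChain_singleton z⟩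
  | cons x xs ih =>
    intro b hb ha hbm
    cases b with
    | nil => simp at hb
    | cons y ys =>
      simp only [List.length_cons, Nat.succ_inj] at hb
      have hx : x ≤ m := ha x (List.mem_cons_self)
      have hy : m ≤ y := hbm y (List.mem_cons_self)
      have ha' : ∀ u ∈ xs, u ≤ m := fun u hu => ha u (List.mem_cons_of_mem _ hu)
      have hb' : ∀ v ∈ ys, m ≤ v := fun v hv => hbm v (List.mem_cons_of_mem _ hv)
      obtain ⟨ih1, ih2⟩ := ih ys hb ha' hb'
      have hmain : List.Chain' (Rm m) (x :: y :: ilv xs ys) := by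
        simp only [List.Chain', List.isChain_cons_cons]
        exact ⟨(Rm_of hx hy).1, ih2 y hy⟩
      constructor
      · exact hmain
      · intro z hz
        show List.Chain' (Rm m) (z :: x :: y :: ilv xs ys)
        refine List.isChain_cons_cons.mpr ?_
        exact ⟨(Rm_of hx hz).2, hmain⟩

lemma ilv_getLast? : ∀ (a b : List ℝ), a.length = b.length →
    (ilv a b).getLast? = b.getLast? := by
  intro a
  induction a with
  | nil =>
    intro b hb
    obtain rfl : b = [] := List.eq_nil_of_length_eq_zero (by simpa using hb.symm)
    rfl
  | cons x xs ih =>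
    intro b hb
    cases b with
    | nil => simp at hb
    | cons y ys =>
      simp only [List.length_cons, Nat.succ_inj] at hb
      show (x :: y :: ilv xs ys).getLast? = _
      rw [List.getLast?_cons_cons]
      cases xs with
      | nil =>
        obtain rfl : ys = [] := List.eq_nil_of_length_eq_zero (by simpa using hb.symm)
        rfl
      | cons u us =>
        cases ys with
        | nil => simp at hb
        | cons v vs =>
          show (y :: u :: v :: ilv us vs).getLast? = _
          rw [List.getLast?_cons_cons]
          calc (u :: v :: ilv us vs).getLast? = (v :: vs).getLast? := ih _ hb
            _ = (y :: v :: vs).getLast? := List.getLast?_cons_cons.symm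

lemma ilv_head? (a b : List ℝ) (h : a.length = b.length) :
    (ilv a b).head? = a.head? := by
  cases a with
  | nil =>
    obtain rfl : b = [] := List.eq_nil_of_length_eq_zero (by simpa using h.symm)
    rfl
  | cons x xs =>
    cases b with
    | nil => simp at h
    | cons y ys => rfl

lemma ilv_ne_nil {a b : List ℝ} (ha : a ≠ []) (hb : b ≠ []) : ilv a b ≠ [] := by
  cases a with
  | nil => exact absurd rfl ha
  | cons x xs =>
    cases b with
    | nil => exact absurd rfl hb
    | cons y ys => exact List.cons_ne_nil _ _

/-! ### Cyclic edge decomposition -/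

lemma zip_snoc : ∀ (l ys : List ℝ) (z : ℝ) (h : l ≠ []),
    l.length = ys.length + 1 →
    l.zip (ys ++ [z]) = l.zip ys ++ [(l.getLast h, z)] := by
  intro l
  induction l with
  | nil => intro ys z h _; exact absurd rfl h
  | cons a l' ih =>
    intro ys z h hlen
    cases ys with
    | nil =>
      obtain rfl : l' = [] := List.eq_nil_of_length_eq_zero (by simpa using hlen)
      simp
    | cons b ys' =>
      simp only [List.length_cons, Nat.succ_inj] at hlen
      have hl' : l' ≠ [] := by
        intro hcontra; rw [hcontra] at hlen; simp at hlen
      show ((a, b) :: l'.zip (ys' ++ [z])) = ((a, b) :: l'.zip ys') ++ _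
      rw [ih ys' z hl' hlen, List.getLast_cons hl']
      simp

lemma chain'_zip_tail {R : ℝ → ℝ → Prop} : ∀ (l : List ℝ), List.Chain' R l →
    ∀ e ∈ l.zip l.tail, R e.1 e.2 := by
  intro l
  induction l with
  | nil => simp
  | cons x xs ih =>
    intro hch e he
    cases xs with
    | nil => simp at he
    | cons y t =>
      simp only [List.Chain', List.isChain_cons_cons] at hch
      have : e ∈ ((x, y) :: (y :: t).zip t) := he
      rcases List.mem_cons.mp this with rfl | hmem
      · exact hch.1
      · exact ih hch.2 e hmem

lemma mem_zip_rotate {l : List ℝ} (hl : l ≠ []) {e : ℝ × ℝ}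
    (he : e ∈ l.zip (l.rotate 1)) :
    e ∈ l.zip l.tail ∨ e = (l.getLast hl, l.head hl) := by
  cases l with
  | nil => exact absurd rfl hl
  | cons x xs =>
    rw [show (x :: xs).rotate 1 = xs ++ [x] by rw [List.rotate_cons_succ]; simp,
      zip_snoc (x :: xs) xs x (List.cons_ne_nil x xs) (by simp)] at he
    rcases List.mem_append.mp he with h | h
    · exact Or.inl h
    · right
      simpa using h

lemma getLast_mem_of_eq {l : List ℝ} (hl : l ≠ []) {t : List ℝ}
    (h : l.getLast? = t.getLast?) (ht : t ≠ []) : l.getLast hl ∈ t := by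
  have h1 : t.getLast? = some (l.getLast hl) := by
    rw [← h, List.getLast?_eq_getLast hl]
  obtain ⟨h2, h3⟩ := List.mem_getLast?_eq_getLast (by rw [h1]; rfl)
  rw [h3]
  exact List.getLast_mem h2

/-! ### Existence of an optimal cycle -/

lemma exists_good (P : Finset ℝ) (h3 : 3 ≤ P.card) :
    ∃ L, IsHamCycleOn P L ∧
      ∀ e ∈ L.zip (L.rotate 1), min e.1 e.2 ≤ medianOf P ∧ medianOf P ≤ max e.1 e.2 := by
  set s := P.sort (· ≤ ·) with hs_def
  set n := P.card with hn_def
  have hslen : s.length = n := Finset.length_sort _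
  have hsorted : s.Pairwise (· ≤ ·) := Finset.pairwise_sort _ _
  have hnodup : s.Nodup := Finset.sort_nodup _ _
  have hsP : s.toFinset = P := by
    ext x; simp [List.mem_toFinset, Finset.mem_sort, hs_def]
  have hmono : ∀ (i j : ℕ) (hij : i ≤ j) (hj : j < s.length),
      s[i]'(lt_of_le_of_lt hij hj) ≤ s[j]'hj := by
    intro i j hij hj
    rcases eq_or_lt_of_le hij with rfl | hlt
    · exact le_refl _
    · have := hsorted.rel_get_of_lt (a := ⟨i, lt_of_le_of_lt hij hj⟩) (b := ⟨j, hj⟩) hlt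
      simpa using this
  by_cases hpar : n % 2 = 1
  · -- odd case
    obtain ⟨k, hk⟩ : ∃ k, n = 2 * k + 1 := ⟨n / 2, by omega⟩
    have hdiv : n / 2 = k := by omega
    have hklt : k < s.length := by omega
    have hm : medianOf P = s[k]'hklt := by
      simp only [medianOf, ← hs_def, ← hn_def]
      rw [if_pos hpar, hdiv, List.getD_eq_getElem s 0 (by omega)]
    have halen : (s.take k).length = k := by rw [List.length_take]; omega
    have hblen : (s.drop (k + 1)).length = k := by rw [List.length_drop]; omega
    have hab_len : (s.take k).length = (s.drop (k + 1)).length := by rw [halen, hblen]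
    have hlow : ∀ x ∈ s.take k, x ≤ s[k]'hklt := by
      intro x hx
      obtain ⟨i, hi, rfl⟩ := List.mem_iff_getElem.mp hx
      rw [List.getElem_take]
      exact hmono i k (by rw [halen] at hi; omega) hklt
    have hhigh : ∀ y ∈ s.drop (k + 1), s[k]'hklt ≤ y := by
      intro y hy
      obtain ⟨j, hj, rfl⟩ := List.mem_iff_getElem.mp hy
      rw [List.getElem_drop]
      exact hmono k (k + 1 + j) (by omega) (by rw [hblen] at hj; omega)
    have ha_ne : s.take k ≠ [] := by
      intro h; rw [h] at halen; simp at halen; omega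
    have hb_ne : s.drop (k + 1) ≠ [] := by
      intro h; rw [h] at hblen; simp at hblen; omega
    have hilv_ne : ilv (s.take k) (s.drop (k + 1)) ≠ [] := ilv_ne_nil ha_ne hb_ne
    set L : List ℝ := s[k]'hklt :: ilv (s.take k) (s.drop (k + 1)) with hL_def
    have hL_ne : L ≠ [] := List.cons_ne_nil _ _
    have hperm : L.Perm s := by
      have h1 : (ilv (s.take k) (s.drop (k + 1))).Perm (s.take k ++ s.drop (k + 1)) :=
        ilv_perm _ _ hab_len
      have h2 : s.drop k = s[k]'hklt :: s.drop (k + 1) := List.drop_eq_getElem_cons hklt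
      refine ((h1.cons (s[k]'hklt)).trans List.perm_middle.symm).trans ?_
      rw [← h2, List.take_append_drop]
    refine ⟨L, ⟨hperm.nodup_iff.mpr hnodup, (List.toFinset_eq_of_perm _ _ hperm).trans hsP⟩, ?_⟩
    intro e he
    rw [hm]
    rcases mem_zip_rotate hL_ne he with h | h
    · have hch : List.Chain' (Rm (s[k]'hklt)) L :=
        (ilv_chain _ _ _ hab_len hlow hhigh).2 _ (le_refl _)
      exact chain'_zip_tail L hch e h
    · rw [h]
      have hlast_mem : L.getLast hL_ne ∈ s.drop (k + 1) := by
        refine getLast_mem_of_eq hL_ne ?_ hb_ne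
        obtain ⟨u, us, hus⟩ := List.exists_cons_of_ne_nil hilv_ne
        rw [hL_def, hus, List.getLast?_cons_cons, ← hus, ilv_getLast? _ _ hab_len]
      have hge : s[k]'hklt ≤ L.getLast hL_ne := hhigh _ hlast_mem
      have hhead : L.head hL_ne = s[k]'hklt := List.head_cons
      rw [hhead]
      exact (Rm_of (le_refl _) hge).2
  · -- even case
    have hpar' : n % 2 = 0 := by omega
    obtain ⟨k, hk⟩ : ∃ k, n = 2 * k := ⟨n / 2, by omega⟩
    have hdiv : n / 2 = k := by omega
    have hk2 : 2 ≤ k := by omega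
    have hklt : k < s.length := by omega
    have hk1lt : k - 1 < s.length := by omega
    have hmid : s[k - 1]'hk1lt ≤ s[k]'hklt := hmono (k - 1) k (by omega) hklt
    have hm : medianOf P = (s[k - 1]'hk1lt + s[k]'hklt) / 2 := by
      simp only [medianOf, ← hs_def, ← hn_def]
      rw [if_neg (by omega), hdiv, List.getD_eq_getElem s 0 (by omega),
        List.getD_eq_getElem s 0 (by omega)]
    have halen : (s.take k).length = k := by rw [List.length_take]; omega
    have hblen : (s.drop k).length = k := by rw [List.length_drop]; omega
    have hab_len : (s.take k).length = (s.drop k).length := by rw [halen, hblen]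
    set m : ℝ := (s[k - 1]'hk1lt + s[k]'hklt) / 2 with hm_def
    have hlow : ∀ x ∈ s.take k, x ≤ m := by
      intro x hx
      obtain ⟨i, hi, rfl⟩ := List.mem_iff_getElem.mp hx
      rw [List.getElem_take]
      have : s[i]'(lt_of_le_of_lt (by rw [halen] at hi; omega) hk1lt) ≤ s[k - 1]'hk1lt :=
        hmono i (k - 1) (by rw [halen] at hi; omega) hk1lt
      rw [hm_def]
      linarith
    have hhigh : ∀ y ∈ s.drop k, m ≤ y := by
      intro y hy
      obtain ⟨j, hj, rfl⟩ := List.mem_iff_getElem.mp hy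
      rw [List.getElem_drop]
      have : s[k]'hklt ≤ s[k + j]'(by rw [hblen] at hj; omega) :=
        hmono k (k + j) (by omega) (by rw [hblen] at hj; omega)
      rw [hm_def]
      linarith
    have ha_ne : s.take k ≠ [] := by
      intro h; rw [h] at halen; simp at halen; omega
    have hb_ne : s.drop k ≠ [] := by
      intro h; rw [h] at hblen; simp at hblen; omega
    set L : List ℝ := ilv (s.take k) (s.drop k) with hL_def
    have hL_ne : L ≠ [] := ilv_ne_nil ha_ne hb_ne
    have hperm : L.Perm s := by
      have h1 : L.Perm (s.take k ++ s.drop k) := ilv_perm _ _ hab_len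
      rwa [List.take_append_drop] at h1
    refine ⟨L, ⟨hperm.nodup_iff.mpr hnodup, (List.toFinset_eq_of_perm _ _ hperm).trans hsP⟩, ?_⟩
    intro e he
    rw [hm]
    rcases mem_zip_rotate hL_ne he with h | h
    · have hch : List.Chain' (Rm m) L := (ilv_chain _ _ _ hab_len hlow hhigh).1
      exact chain'_zip_tail L hch e h
    · rw [h]
      have hhead_mem : L.head hL_ne ∈ s.take k := by
        refine List.mem_of_mem_head? ?_
        show (s.take k).head? = some (L.head hL_ne)
        rw [← ilv_head? _ _ hab_len, ← hL_def, List.head?_eq_head hL_ne]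
      have hlast_mem : L.getLast hL_ne ∈ s.drop k := by
        refine getLast_mem_of_eq hL_ne ?_ hb_ne
        rw [hL_def, ilv_getLast? _ _ hab_len]
      exact (Rm_of (hlow _ hhead_mem) (hhigh _ hlast_mem)).2

/-- A Hamiltonian cycle on a finite set of at least 3 reals is longest iff each of
its edges, viewed as a closed interval, contains the median of the set. -/
theorem stmt3 (P : Finset ℝ) (hcard : 3 ≤ P.card)
    (C : List ℝ) (hC : IsHamCycleOn P C) :
    (∀ L : List ℝ, IsHamCycleOn P L → cycleLen L ≤ cycleLen C) ↔
      (∀ e ∈ C.zip (C.rotate 1), min e.1 e.2 ≤ medianOf P ∧ medianOf P ≤ max e.1 e.2) := by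
  set m := medianOf P with hm_def
  have hsum : ∀ {L L' : List ℝ}, IsHamCycleOn P L → IsHamCycleOn P L' →
      (L.map fun x => |x - m|).sum = (L'.map fun x => |x - m|).sum := by
    intro L L' h1 h2
    have hperm : L.Perm L' :=
      List.perm_of_nodup_nodup_toFinset_eq h1.1 h2.1 (h1.2.trans h2.2.symm)
    exact List.Perm.sum_eq (hperm.map _)
  constructor
  · intro hmax
    obtain ⟨L0, hL0, hL0edges⟩ := exists_good P hcard
    have h1 : cycleLen L0 = 2 * (L0.map fun x => |x - m|).sum :=
      (key m L0).2.mpr hL0edges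
    have h2 : cycleLen C ≤ 2 * (C.map fun x => |x - m|).sum := (key m C).1
    have h3 : cycleLen L0 ≤ cycleLen C := hmax L0 hL0
    have h4 : cycleLen C = 2 * (C.map fun x => |x - m|).sum := by
      rw [hsum hC hL0]
      rw [hsum hC hL0] at h2
      linarith [h1 ▸ h3]
    exact (key m C).2.mp h4
  · intro hedges L hL
    have h1 : cycleLen C = 2 * (C.map fun x => |x - m|).sum :=
      (key m C).2.mpr hedges
    have h2 : cycleLen L ≤ 2 * (L.map fun x => |x - m|).sum := (key m L).1
    rw [hsum hL hC] at h2
    linarith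
end

section
/- Let P be a set of 2k+1 ≥ 3 distinct real numbers with median m ∈ P. In any maximum-length Hamiltonian cycle on P, the two edges incident to m have their other endpoints on opposite sides of m (one strictly less than m and one strictly greater than m). -/
namespace HamAux

noncomputable def pLen : List ℝ → ℝ
  | a :: b :: t => |a - b| + pLen (b :: t)
  | _ => 0

@[simp] lemma pLen_nil : pLen [] = 0 := by simp [pLen]
@[simp] lemma pLen_single (a : ℝ) : pLen [a] = 0 := by simp [pLen]
@[simp] lemma pLen_cons2 (a b : ℝ) (t : List ℝ) :
    pLen (a :: b :: t) = |a - b| + pLen (b :: t) := by rw [pLen]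

lemma gLD_irrel : ∀ (l : List ℝ), l ≠ [] → ∀ d₁ d₂ : ℝ, l.getLastD d₁ = l.getLastD d₂
  | [b], _, d₁, d₂ => by simp
  | b :: c :: l, _, d₁, d₂ => by
      simp only [List.getLastD_cons]

lemma gLD_cons (a : ℝ) (l : List ℝ) (hl : l ≠ []) (d : ℝ) :
    (a :: l).getLastD d = l.getLastD d := by
  rw [List.getLastD_cons]; exact gLD_irrel l hl a d

lemma gLD_mem : ∀ (l : List ℝ), l ≠ [] → ∀ d : ℝ, l.getLastD d ∈ l
  | [b], _, d => by simp
  | b :: c :: l, _, d => by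
      rw [gLD_cons _ _ (by simp)]
      exact List.mem_cons_of_mem _ (gLD_mem (c :: l) (by simp) d)

lemma hD_mem (l : List ℝ) (hl : l ≠ []) (d : ℝ) : l.headD d ∈ l := by
  cases l with
  | nil => exact absurd rfl hl
  | cons a t => simp

@[simp] lemma gLD_concat : ∀ (s : List ℝ) (b d : ℝ), (s ++ [b]).getLastD d = b
  | [], b, d => by simp
  | a :: s, b, d => by
      rw [List.cons_append, List.getLastD_cons]
      exact gLD_concat s b a

lemma gLD_append (s l : List ℝ) (hl : l ≠ []) (d : ℝ) :
    (s ++ l).getLastD d = l.getLastD d := by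
  induction s with
  | nil => rfl
  | cons a s ih =>
      rw [List.cons_append, gLD_cons _ _ (by simp [hl]), ih]

@[simp] lemma gLD_reverse (l : List ℝ) (d : ℝ) : l.reverse.getLastD d = l.headD d := by
  cases l with
  | nil => rfl
  | cons a t => rw [List.reverse_cons, gLD_concat, List.headD_cons]

@[simp] lemma hD_reverse (l : List ℝ) (d : ℝ) : l.reverse.headD d = l.getLastD d := by
  conv_rhs => rw [← List.reverse_reverse l, gLD_reverse]

lemma pLen_concat : ∀ (l : List ℝ), l ≠ [] → ∀ x : ℝ,
    pLen (l ++ [x]) = pLen l + |l.getLastD 0 - x|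
  | [a], _, x => by simp
  | a :: b :: t, _, x => by
      have h := pLen_concat (b :: t) (by simp) x
      simp only [List.cons_append] at h ⊢
      rw [pLen_cons2, pLen_cons2, h,
        gLD_cons a _ (by simp)]
      ring

lemma pLen_reverse : ∀ l : List ℝ, pLen l.reverse = pLen l
  | [] => by simp
  | [a] => by simp
  | a :: b :: t => by
      rw [List.reverse_cons, pLen_concat _ (by simp) a, gLD_reverse,
        List.headD_cons, pLen_reverse (b :: t), pLen_cons2, abs_sub_comm]
      ring

lemma pLen_append_cons : ∀ (s : List ℝ) (x : ℝ) (t : List ℝ),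
    pLen (s ++ x :: t) = pLen (s ++ [x]) + pLen (x :: t)
  | [], x, t => by simp
  | [a], x, t => by simp
  | a :: b :: s, x, t => by
      have h := pLen_append_cons (b :: s) x t
      simp only [List.cons_append] at h ⊢
      rw [pLen_cons2, h, pLen_cons2]
      ring


/-- the edge list of a cycle -/
def edges (l : List ℝ) : List (ℝ × ℝ) := l.zip (l.rotate 1)

lemma zip_concat : ∀ (t : List ℝ) (a c : ℝ),
    (a :: t).zip (t ++ [c]) = (a :: t).zip t ++ [((a :: t).getLastD 0, c)]
  | [], a, c => by simp
  | b :: t, a, c => by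
      rw [List.cons_append, List.zip_cons_cons, zip_concat t b c, List.zip_cons_cons,
        gLD_cons a _ (by simp)]
      rfl

lemma edges_cons (a : ℝ) (t : List ℝ) :
    edges (a :: t) = (a :: t).zip t ++ [((a :: t).getLastD 0, a)] := by
  rw [edges, show (1 : ℕ) = 0 + 1 from rfl, List.rotate_cons_succ, List.rotate_zero,
    zip_concat]

lemma zip_tail_concat : ∀ (t : List ℝ), t ≠ [] → ∀ a : ℝ,
    (t ++ [a]).zip (t.tail ++ [a]) = t.zip t.tail ++ [(t.getLastD 0, a)]
  | [c], _, a => by simp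
  | c :: d :: t, _, a => by
      have h := zip_tail_concat (d :: t) (by simp) a
      simp only [List.cons_append, List.tail_cons] at h ⊢
      rw [List.zip_cons_cons, h, List.zip_cons_cons, gLD_cons c _ (by simp)]
      rfl

lemma sum_zip_tail : ∀ l : List ℝ,
    ((l.zip l.tail).map fun p => |p.1 - p.2|).sum = pLen l
  | [] => by simp
  | [a] => by simp
  | a :: b :: t => by
      rw [List.tail_cons, List.zip_cons_cons, List.map_cons, List.sum_cons,
        show (b :: t).zip t = (b :: t).zip (b :: t).tail from rfl,
        sum_zip_tail (b :: t), pLen_cons2]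

lemma cycleLen_eq (a : ℝ) (t : List ℝ) :
    cycleLen (a :: t) = pLen (a :: t) + |(a :: t).getLastD 0 - a| := by
  have h : (a :: t).zip ((a :: t).rotate 1) = edges (a :: t) := rfl
  rw [cycleLen, h, edges_cons a t, List.map_append, List.sum_append,
    show (a :: t).zip t = (a :: t).zip (a :: t).tail from rfl, sum_zip_tail]
  simp


lemma edges_rotate_one (l : List ℝ) : (edges (l.rotate 1)).Perm (edges l) := by
  match l with
  | [] => simp [edges]
  | [a] =>
      rw [show ([a] : List ℝ).rotate 1 = [a] by
        rw [show (1 : ℕ) = 0 + 1 from rfl, List.rotate_cons_succ, List.rotate_zero]; rfl]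
  | a :: c :: t =>
      have h1 : (a :: c :: t).rotate 1 = (c :: t) ++ [a] := by
        rw [show (1 : ℕ) = 0 + 1 from rfl, List.rotate_cons_succ, List.rotate_zero]
      rw [h1]
      have h2 : edges ((c :: t) ++ [a])
          = (c :: t).zip (c :: t).tail ++ [((c :: t).getLastD 0, a)] ++ [(a, c)] := by
        rw [show (c :: t) ++ [a] = c :: (t ++ [a]) from rfl, edges_cons]
        rw [show (c :: (t ++ [a])).zip (t ++ [a])
            = ((c :: t) ++ [a]).zip ((c :: t).tail ++ [a]) from rfl]
        rw [zip_tail_concat (c :: t) (by simp) a]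
        rw [show c :: (t ++ [a]) = (c :: t) ++ [a] from rfl, gLD_concat]
      have h3 : edges (a :: c :: t)
          = (a, c) :: ((c :: t).zip (c :: t).tail ++ [((c :: t).getLastD 0, a)]) := by
        rw [edges_cons, gLD_cons a _ (by simp), List.zip_cons_cons]
        rfl
      rw [h2, h3]
      exact (List.perm_append_singleton _ _)

lemma edges_rotate (l : List ℝ) (n : ℕ) : (edges (l.rotate n)).Perm (edges l) := by
  induction n with
  | zero => rw [List.rotate_zero]
  | succ n ih =>
      have : l.rotate (n + 1) = (l.rotate n).rotate 1 := by rw [List.rotate_rotate]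
      rw [this]
      exact (edges_rotate_one (l.rotate n)).trans ih

lemma cycleLen_eq_edges (l : List ℝ) :
    cycleLen l = ((edges l).map fun p => |p.1 - p.2|).sum := rfl

lemma cycleLen_rotate (l : List ℝ) (n : ℕ) : cycleLen (l.rotate n) = cycleLen l := by
  rw [cycleLen_eq_edges, cycleLen_eq_edges]
  exact ((edges_rotate l n).map _).sum_eq


lemma mem_edges_head (m v : ℝ) (T : List ℝ) (hT : T ≠ []) (hnd : (m :: T).Nodup)
    (h : (m, v) ∈ edges (m :: T)) : v = T.headD 0 := by
  have hmT : m ∉ T := (List.nodup_cons.1 hnd).1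
  obtain ⟨x, T', rfl⟩ := List.exists_cons_of_ne_nil hT
  rw [edges_cons, List.zip_cons_cons] at h
  simp only [List.headD_cons]
  rcases List.mem_append.1 h with h' | h'
  · rcases List.mem_cons.1 h' with h'' | h''
    · exact (Prod.mk.injEq .. ▸ h'').2.symm ▸ (Prod.ext_iff.1 h'').2.symm
    · exact absurd (List.of_mem_zip h'').1 hmT
  · exfalso
    have := List.mem_singleton.1 h'
    have hm : m = (m :: x :: T').getLastD 0 := (Prod.ext_iff.1 this).1
    rw [gLD_cons m _ (by simp)] at hm
    exact hmT (hm ▸ gLD_mem (x :: T') (by simp) 0)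

lemma mem_edges_last (m v : ℝ) (T : List ℝ) (hT : T ≠ []) (hnd : (m :: T).Nodup)
    (h : (v, m) ∈ edges (m :: T)) : v = T.getLastD 0 := by
  have hmT : m ∉ T := (List.nodup_cons.1 hnd).1
  obtain ⟨x, T', rfl⟩ := List.exists_cons_of_ne_nil hT
  rw [edges_cons, List.zip_cons_cons] at h
  rcases List.mem_append.1 h with h' | h'
  · rcases List.mem_cons.1 h' with h'' | h''
    · exfalso
      have h2 : m = x := (Prod.mk.inj h'').2
      rw [h2] at hmT
      exact hmT List.mem_cons_self
    · exact absurd (List.mem_of_mem_tail (List.of_mem_zip h'').2) hmT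
  · have := List.mem_singleton.1 h'
    rw [gLD_cons m _ (by simp)] at this
    exact (Prod.ext_iff.1 this).1

lemma zip_tail_split : ∀ (T : List ℝ) (v b : ℝ), (v, b) ∈ T.zip T.tail →
    ∃ u w, T = u ++ v :: b :: w
  | [], v, b, h => by simp at h
  | [c], v, b, h => by simp at h
  | c :: d :: T', v, b, h => by
      rw [List.tail_cons, List.zip_cons_cons] at h
      rcases List.mem_cons.1 h with h' | h'
      · obtain ⟨rfl, rfl⟩ := Prod.mk.injEq .. ▸ h'
        exact ⟨[], T', rfl⟩
      · obtain ⟨u, w, hw⟩ := zip_tail_split (d :: T') v b h'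
        exact ⟨c :: u, w, by rw [List.cons_append, ← hw]⟩

lemma alternation_aux : ∀ (T : List ℝ) (p : ℝ → Bool), T ≠ [] →
    (∀ e ∈ T.zip T.tail, ¬(p e.1 = true ∧ p e.2 = true)) →
    p (T.getLastD 0) = false →
    T.countP p + (if p (T.headD 0) = true then 0 else 1) ≤ T.countP (fun a => !p a)
  | [a], p, _, _, hlast => by
      simp only [List.getLastD_cons, List.getLastD_nil] at hlast
      simp [List.countP_cons, hlast]
  | a :: b :: r, p, _, hadj, hlast => by
      have hlast' : p ((b :: r).getLastD 0) = false := by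
        rwa [gLD_cons a _ (by simp)] at hlast
      have hadj' : ∀ e ∈ (b :: r).zip (b :: r).tail, ¬(p e.1 = true ∧ p e.2 = true) := by
        intro e he
        exact hadj e (by rw [List.tail_cons, List.zip_cons_cons]; exact List.mem_cons_of_mem _ he)
      have ih := alternation_aux (b :: r) p (by simp) hadj' hlast'
      have hab : ¬(p a = true ∧ p b = true) := by
        apply hadj (a, b)
        rw [List.tail_cons, List.zip_cons_cons]; exact List.mem_cons_self
      rw [List.countP_cons, List.countP_cons (p := fun a => !p a)]
      simp only [List.headD_cons] at ih ⊢
      rcases Bool.eq_false_or_eq_true (p a) with ha | ha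
      · have hb : p b = false := by
          rcases Bool.eq_false_or_eq_true (p b) with hb | hb
          · exact absurd ⟨ha, hb⟩ hab
          · exact hb
        simp only [ha, hb] at ih ⊢
        simp at ih ⊢
        omega
      · rcases Bool.eq_false_or_eq_true (p b) with hb | hb <;>
          · simp only [ha, hb] at ih ⊢
            simp at ih ⊢
            omega

lemma alternation (T : List ℝ) (p : ℝ → Bool) (hT : T ≠ [])
    (hadj : ∀ e ∈ T.zip T.tail, ¬(p e.1 = true ∧ p e.2 = true))
    (hlast : p (T.getLastD 0) = false) (hhead : p (T.headD 0) = false) :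
    T.countP p + 1 ≤ T.countP (fun a => !p a) := by
  have := alternation_aux T p hT hadj hlast
  rw [hhead] at this
  simpa using this

lemma countP_eq_card_filter (l : List ℝ) (hl : l.Nodup) (p : ℝ → Prop) [DecidablePred p] :
    l.countP (fun a => decide (p a)) = (l.toFinset.filter p).card := by
  rw [List.countP_eq_length_filter]
  have h : (l.filter (fun a => decide (p a))).toFinset = l.toFinset.filter p := by
    ext a; simp
  rw [← h, List.toFinset_card_of_nodup (hl.filter _)]


lemma exchange (Pf : Finset ℝ) (m v1 b : ℝ) (u w : List ℝ) (hw : w ≠ [])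
    (hham : IsHamCycleOn Pf (m :: (u ++ v1 :: b :: w)))
    (hgain : |v1 - b| + |w.getLastD 0 - m| < |v1 - w.getLastD 0| + |b - m|) :
    ∃ L, IsHamCycleOn Pf L ∧ cycleLen (m :: (u ++ v1 :: b :: w)) < cycleLen L := by
  obtain ⟨hw0, w0, rfl⟩ := List.exists_cons_of_ne_nil hw
  set w : List ℝ := hw0 :: w0 with hwdef
  set y : ℝ := w.getLastD 0 with hy
  refine ⟨m :: (u ++ v1 :: (w.reverse ++ [b])), ?_, ?_⟩
  · -- permutation
    have hperm : (m :: (u ++ v1 :: (w.reverse ++ [b]))).Perm (m :: (u ++ v1 :: b :: w)) := by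
      refine List.Perm.cons m (List.Perm.append_left u (List.Perm.cons v1 ?_))
      exact (List.perm_append_singleton b w.reverse).trans ((w.reverse_perm).cons b)
    exact ⟨hperm.nodup_iff.2 hham.1, (List.toFinset_eq_of_perm _ _ hperm).trans hham.2⟩
  · -- lengths
    have hQ1 : cycleLen (m :: (u ++ v1 :: b :: w))
        = pLen ((m :: u) ++ [v1]) + (|v1 - b| + (|b - hw0| + pLen w)) + |y - m| := by
      rw [cycleLen_eq]
      have h1 : (m :: (u ++ v1 :: b :: w)).getLastD 0 = y := by
        rw [hy, show m :: (u ++ v1 :: b :: w) = (m :: u ++ [v1, b]) ++ w by simp,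
          gLD_append _ _ (by simp [hwdef])]
      rw [h1]
      have h2 : pLen (m :: (u ++ v1 :: b :: w)) = pLen ((m :: u) ++ [v1]) + pLen (v1 :: b :: w) := by
        have := pLen_append_cons (m :: u) v1 (b :: w)
        simpa using this
      rw [h2, pLen_cons2, pLen_cons2]
    have hQ2 : cycleLen (m :: (u ++ v1 :: (w.reverse ++ [b])))
        = pLen ((m :: u) ++ [v1]) + (|v1 - y| + (pLen w + |hw0 - b|)) + |b - m| := by
      rw [cycleLen_eq]
      have h1 : (m :: (u ++ v1 :: (w.reverse ++ [b]))).getLastD 0 = b := by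
        rw [show m :: (u ++ v1 :: (w.reverse ++ [b])) = (m :: u ++ v1 :: w.reverse) ++ [b] by simp,
          gLD_concat]
      rw [h1]
      have h2 : pLen (m :: (u ++ v1 :: (w.reverse ++ [b])))
          = pLen ((m :: u) ++ [v1]) + pLen (v1 :: (w.reverse ++ [b])) := by
        have := pLen_append_cons (m :: u) v1 (w.reverse ++ [b])
        simpa using this
      rw [h2]
      have hrev : w.reverse ≠ [] := by simp [hwdef]
      obtain ⟨e, r, her⟩ := List.exists_cons_of_ne_nil hrev
      have he : e = y := by
        have := hD_reverse w 0
        rw [her] at this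
        simpa [hy] using this
      have h3 : pLen (v1 :: (w.reverse ++ [b])) = |v1 - y| + pLen (w.reverse ++ [b]) := by
        rw [her, List.cons_append, pLen_cons2, he]
      have h4 : pLen (w.reverse ++ [b]) = pLen w + |hw0 - b| := by
        rw [pLen_concat _ hrev b, pLen_reverse, gLD_reverse]
        simp [hwdef]
      rw [h3, h4]
    have habs := abs_sub_comm hw0 b
    rw [hQ1, hQ2]
    linarith


lemma median_counts (k : ℕ) (P : Finset ℝ) (hcard : P.card = 2 * k + 1) (m : ℝ)
    (hm : m = (P.sort (· ≤ ·)).getD k 0) :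
    m ∈ P ∧ (P.filter (fun a => a < m)).card = k ∧ (P.filter (fun a => m < a)).card = k := by
  classical
  set s : List ℝ := P.sort (· ≤ ·) with hs
  have hlen : s.length = 2 * k + 1 := by rw [hs, Finset.length_sort, hcard]
  have hk1 : k < s.length := by omega
  have hms : m = s[k] := by rw [hm]; exact List.getD_eq_getElem s 0 hk1
  have hmem : m ∈ P := by
    rw [← Finset.mem_sort (α := ℝ) (· ≤ ·), ← hs, hms]
    exact List.getElem_mem hk1
  have hpw : List.Pairwise (· < ·) s := (Finset.sortedLT_sort P).pairwise
  have hnds : s.Nodup := (Finset.sortedLT_sort P).nodup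
  have hsubP : ∀ a ∈ s, a ∈ P := fun a ha => (Finset.mem_sort (α := ℝ) (· ≤ ·)).1 (hs ▸ ha)
  -- lower part
  have hlow : ∀ a ∈ s.take k, a < m := by
    intro a ha
    have hpw2 := hpw
    rw [← List.take_append_drop k s] at hpw2
    obtain ⟨-, -, hcross⟩ := List.pairwise_append.1 hpw2
    have hmd : m ∈ s.drop k := by
      have hlt : 0 < (s.drop k).length := by simp [hlen]; omega
      have h0 : (s.drop k)[0] = s[k + 0] := List.getElem_drop
      simp only [Nat.add_zero] at h0
      rw [hms]
      exact h0 ▸ List.getElem_mem hlt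
    exact hcross a ha m hmd
  have hhigh : ∀ a ∈ s.drop (k + 1), m < a := by
    intro a ha
    have hpw2 := hpw
    rw [← List.take_append_drop (k + 1) s] at hpw2
    obtain ⟨-, -, hcross⟩ := List.pairwise_append.1 hpw2
    have hmt : m ∈ s.take (k + 1) := by
      have hlt : k < (s.take (k + 1)).length := by simp [hlen]; omega
      have h0 : (s.take (k + 1))[k] = s[k] := List.getElem_take
      rw [hms]
      exact h0 ▸ List.getElem_mem hlt
    exact hcross m hmt a ha
  -- lower bound on B
  have cardB : k ≤ (P.filter (fun a => a < m)).card := by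
    have hsub : (s.take k).toFinset ⊆ P.filter (fun a => a < m) := by
      intro a ha
      rw [List.mem_toFinset] at ha
      exact Finset.mem_filter.2 ⟨hsubP a ((s.take_sublist k).subset ha), hlow a ha⟩
    have hcardtake : (s.take k).toFinset.card = k := by
      rw [List.toFinset_card_of_nodup (hnds.sublist (s.take_sublist k))]
      rw [List.length_take]; omega
    calc k = (s.take k).toFinset.card := hcardtake.symm
      _ ≤ _ := Finset.card_le_card hsub
  have cardA : k ≤ (P.filter (fun a => m < a)).card := by
    have hsub : (s.drop (k + 1)).toFinset ⊆ P.filter (fun a => m < a) := by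
      intro a ha
      rw [List.mem_toFinset] at ha
      exact Finset.mem_filter.2 ⟨hsubP a ((s.drop_sublist (k + 1)).subset ha), hhigh a ha⟩
    have hcarddrop : (s.drop (k + 1)).toFinset.card = k := by
      rw [List.toFinset_card_of_nodup (hnds.sublist (s.drop_sublist (k + 1)))]
      rw [List.length_drop]; omega
    calc k = (s.drop (k + 1)).toFinset.card := hcarddrop.symm
      _ ≤ _ := Finset.card_le_card hsub
  -- upper bound
  have hdisj : Disjoint (P.filter (fun a => a < m)) (P.filter (fun a => m < a)) := by
    rw [Finset.disjoint_left]
    intro a ha hb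
    have h1 := (Finset.mem_filter.1 ha).2
    have h2 := (Finset.mem_filter.1 hb).2
    linarith
  have hsubE : (P.filter (fun a => a < m)) ∪ (P.filter (fun a => m < a)) ⊆ P.erase m := by
    intro a ha
    rcases Finset.mem_union.1 ha with h | h <;>
      obtain ⟨h1, h2⟩ := Finset.mem_filter.1 h <;>
      exact Finset.mem_erase.2 ⟨by intro hh; rw [hh] at h2; exact lt_irrefl m h2, h1⟩
  have hupper : (P.filter (fun a => a < m)).card + (P.filter (fun a => m < a)).card ≤ 2 * k := by
    have h1 := Finset.card_le_card hsubE
    rw [Finset.card_union_of_disjoint hdisj] at h1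
    rw [Finset.card_erase_of_mem hmem, hcard] at h1
    omega
  exact ⟨hmem, by omega, by omega⟩

end HamAux

open HamAux

/-- For an odd-sized set `P` of `2k+1 ≥ 3` distinct reals with median `m ∈ P`, in
any longest Hamiltonian cycle on `P` the two edges incident to `m` have their
other endpoints on opposite sides of `m`. The edges of the cycle `C` are the
pairs in `C.zip (C.rotate 1)`; `(m, x)` and `(y, m)` are the two edges incident
to the median. -/
theorem stmt4 (k : ℕ) (hk : 1 ≤ k) (P : Finset ℝ) (hcard : P.card = 2 * k + 1)
    (m : ℝ) (hm : m = (P.sort (· ≤ ·)).getD k 0)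
    (C : List ℝ) (hC : IsHamCycleOn P C)
    (hmax : ∀ L : List ℝ, IsHamCycleOn P L → cycleLen L ≤ cycleLen C) :
    ∀ x y : ℝ, (m, x) ∈ C.zip (C.rotate 1) → (y, m) ∈ C.zip (C.rotate 1) →
      (x < m ∧ m < y) ∨ (y < m ∧ m < x) := by
  classical
  intro x y hx hy
  obtain ⟨hnd, htf⟩ := hC
  obtain ⟨hmP, hBcard, hAcard⟩ := median_counts k P hcard m hm
  have hmC : m ∈ C := by rw [← List.mem_toFinset, htf]; exact hmP
  obtain ⟨C1, C2, rfl⟩ := List.append_of_mem hmC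
  have hlenC : (C1 ++ m :: C2).length = 2 * k + 1 := by
    rw [← List.toFinset_card_of_nodup hnd, htf, hcard]
  set T : List ℝ := C2 ++ C1 with hT
  have hrot : (C1 ++ m :: C2).rotate C1.length = m :: T := by
    rw [List.rotate_append_length_eq]; simp [hT]
  have hperm : (m :: T).Perm (C1 ++ m :: C2) := hrot ▸ List.rotate_perm (C1 ++ m :: C2) C1.length
  have hndC' : (m :: T).Nodup := hperm.nodup_iff.2 hnd
  have htfC' : (m :: T).toFinset = P := (List.toFinset_eq_of_perm _ _ hperm).trans htf
  have hmT : m ∉ T := (List.nodup_cons.1 hndC').1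
  have hndT : T.Nodup := (List.nodup_cons.1 hndC').2
  have hlenT : T.length = 2 * k := by
    have h1 := hperm.length_eq
    rw [hlenC] at h1
    simpa using h1
  have hTne : T ≠ [] := by
    intro h; rw [h] at hlenT; simp at hlenT; omega
  have hp : (edges (m :: T)).Perm (edges (C1 ++ m :: C2)) := by
    rw [← hrot]; exact edges_rotate _ _
  have hx' : (m, x) ∈ edges (m :: T) := hp.mem_iff.2 hx
  have hy' : (y, m) ∈ edges (m :: T) := hp.mem_iff.2 hy
  have hxval : x = T.headD 0 := mem_edges_head m x T hTne hndC' hx'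
  have hyval : y = T.getLastD 0 := mem_edges_last m y T hTne hndC' hy'
  have hxT : x ∈ T := hxval ▸ hD_mem T hTne 0
  have hyT : y ∈ T := hyval ▸ gLD_mem T hTne 0
  have hxm : x ≠ m := fun h => hmT (h ▸ hxT)
  have hym : y ≠ m := fun h => hmT (h ▸ hyT)
  rw [List.toFinset_cons] at htfC'
  have htfT : T.toFinset = P.erase m := by
    rw [← htfC', Finset.erase_insert (by simpa using hmT)]
  -- counts
  have hcA : T.countP (fun a => decide (m < a)) = k := by
    rw [countP_eq_card_filter T hndT (fun a => m < a), htfT, Finset.filter_erase,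
      Finset.erase_eq_of_notMem (by simp)]
    exact hAcard
  have hcB : T.countP (fun a => decide (a < m)) = k := by
    rw [countP_eq_card_filter T hndT (fun a => a < m), htfT, Finset.filter_erase,
      Finset.erase_eq_of_notMem (by simp)]
    exact hBcard
  have hcA' : T.countP (fun a => !decide (m < a)) = k := by
    have hfun : (fun a : ℝ => !decide (m < a)) = (fun a : ℝ => decide (¬ m < a)) := by
      funext a; rw [decide_not]
    rw [hfun, countP_eq_card_filter T hndT (fun a => ¬ m < a), htfT, Finset.filter_erase]
    have : (P.filter (fun a => ¬ m < a)).erase m = P.filter (fun a => a < m) := by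
      ext a
      simp only [Finset.mem_erase, Finset.mem_filter, not_lt]
      constructor
      · rintro ⟨h1, h2, h3⟩; exact ⟨h2, lt_of_le_of_ne h3 h1⟩
      · rintro ⟨h1, h2⟩; exact ⟨ne_of_lt h2, h1, le_of_lt h2⟩
    rw [this]; exact hBcard
  have hcB' : T.countP (fun a => !decide (a < m)) = k := by
    have hfun : (fun a : ℝ => !decide (a < m)) = (fun a : ℝ => decide (¬ a < m)) := by
      funext a; rw [decide_not]
    rw [hfun, countP_eq_card_filter T hndT (fun a => ¬ a < m), htfT, Finset.filter_erase]
    have : (P.filter (fun a => ¬ a < m)).erase m = P.filter (fun a => m < a) := by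
      ext a
      simp only [Finset.mem_erase, Finset.mem_filter, not_lt]
      constructor
      · rintro ⟨h1, h2, h3⟩; exact ⟨h2, lt_of_le_of_ne h3 (Ne.symm h1)⟩
      · rintro ⟨h1, h2⟩; exact ⟨(ne_of_lt h2).symm, h1, le_of_lt h2⟩
    rw [this]; exact hAcard
  have hclen : cycleLen (m :: T) = cycleLen (C1 ++ m :: C2) := by
    rw [← hrot]; exact cycleLen_rotate _ _
  rcases lt_trichotomy x m with hxlt | hxeq | hxgt
  · rcases lt_trichotomy y m with hylt | hyeq | hygt
    · -- both below: contradiction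
      exfalso
      have hadjex : ∃ e ∈ T.zip T.tail, m < e.1 ∧ m < e.2 := by
        by_contra hno
        push_neg at hno
        have halt := alternation T (fun a => decide (m < a)) hTne
          (by
            intro e he hcon
            have d1 := of_decide_eq_true hcon.1
            have d2 := of_decide_eq_true hcon.2
            exact absurd d2 (not_lt.2 (hno e he d1)))
          (by rw [← hyval]; exact decide_eq_false (not_lt.2 hylt.le))
          (by rw [← hxval]; exact decide_eq_false (not_lt.2 hxlt.le))
        rw [hcA, hcA'] at halt
        omega
      obtain ⟨⟨v1, b⟩, he, h1, h2⟩ := hadjex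
      simp only at h1 h2
      obtain ⟨u, w, hTw⟩ := zip_tail_split T v1 b he
      have hwne : w ≠ [] := by
        rintro rfl
        have hgl : T.getLastD 0 = b := by
          rw [hTw, show u ++ [v1, b] = (u ++ [v1]) ++ [b] by simp, gLD_concat]
        rw [← hyval] at hgl
        linarith [hgl ▸ hylt]
      have hyw : w.getLastD 0 = y := by
        rw [hyval, hTw, show u ++ v1 :: b :: w = (u ++ [v1, b]) ++ w by simp,
          gLD_append _ _ hwne]
      have hhamC' : IsHamCycleOn P (m :: (u ++ v1 :: b :: w)) := by
        rw [← hTw]; exact ⟨hndC', by rw [List.toFinset_cons, htfC']⟩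
      have hgain : |v1 - b| + |w.getLastD 0 - m| < |v1 - w.getLastD 0| + |b - m| := by
        rw [hyw]
        have a1 : |v1 - y| = v1 - y := abs_of_pos (by linarith)
        have a2 : |b - m| = b - m := abs_of_pos (by linarith)
        have a3 : |y - m| = m - y := by rw [abs_of_neg (by linarith)]; ring
        have a4 : |v1 - b| < v1 + b - 2 * m := by
          rcases le_total v1 b with h | h
          · rw [abs_of_nonpos (by linarith)]; linarith
          · rw [abs_of_nonneg (by linarith)]; linarith
        linarith
      obtain ⟨L, hLham, hLlen⟩ := exchange P m v1 b u w hwne hhamC' hgain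
      have hmaxL := hmax L hLham
      rw [← hTw] at hLlen
      linarith [hclen ▸ hLlen]
    · exact absurd hyeq hym
    · exact Or.inl ⟨hxlt, hygt⟩
  · exact absurd hxeq hxm
  · rcases lt_trichotomy y m with hylt | hyeq | hygt
    · exact Or.inr ⟨hylt, hxgt⟩
    · exact absurd hyeq hym
    · -- both above: contradiction
      exfalso
      have hadjex : ∃ e ∈ T.zip T.tail, e.1 < m ∧ e.2 < m := by
        by_contra hno
        push_neg at hno
        have halt := alternation T (fun a => decide (a < m)) hTne
          (by
            intro e he hcon
            have d1 := of_decide_eq_true hcon.1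
            have d2 := of_decide_eq_true hcon.2
            exact absurd d2 (not_lt.2 (hno e he d1)))
          (by rw [← hyval]; exact decide_eq_false (not_lt.2 hygt.le))
          (by rw [← hxval]; exact decide_eq_false (not_lt.2 hxgt.le))
        rw [hcB, hcB'] at halt
        omega
      obtain ⟨⟨v1, b⟩, he, h1, h2⟩ := hadjex
      simp only at h1 h2
      obtain ⟨u, w, hTw⟩ := zip_tail_split T v1 b he
      have hwne : w ≠ [] := by
        rintro rfl
        have hgl : T.getLastD 0 = b := by
          rw [hTw, show u ++ [v1, b] = (u ++ [v1]) ++ [b] by simp, gLD_concat]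
        rw [← hyval] at hgl
        linarith [hgl ▸ hygt]
      have hyw : w.getLastD 0 = y := by
        rw [hyval, hTw, show u ++ v1 :: b :: w = (u ++ [v1, b]) ++ w by simp,
          gLD_append _ _ hwne]
      have hhamC' : IsHamCycleOn P (m :: (u ++ v1 :: b :: w)) := by
        rw [← hTw]; exact ⟨hndC', by rw [List.toFinset_cons, htfC']⟩
      have hgain : |v1 - b| + |w.getLastD 0 - m| < |v1 - w.getLastD 0| + |b - m| := by
        rw [hyw]
        have a1 : |v1 - y| = y - v1 := by rw [abs_of_neg (by linarith)]; ring
        have a2 : |b - m| = m - b := by rw [abs_of_neg (by linarith)]; ring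
        have a3 : |y - m| = y - m := abs_of_pos (by linarith)
        have a4 : |v1 - b| < 2 * m - v1 - b := by
          rcases le_total v1 b with h | h
          · rw [abs_of_nonpos (by linarith)]; linarith
          · rw [abs_of_nonneg (by linarith)]; linarith
        linarith
      obtain ⟨L, hLham, hLlen⟩ := exchange P m v1 b u w hwne hhamC' hgain
      have hmaxL := hmax L hLham
      rw [← hTw] at hLlen
      linarith [hclen ▸ hLlen]
end

section
/- Let P be a set of n = 2k+1 ≥ 3 distinct real numbers, and suppose there is an open interval I of length h > 0 lying strictly between the (k+1)-st and (k+2)-nd smallest elements of P (i.e., I separates the leftmost k+1 points from the rightmost k points). Then in any maximum-length Hamiltonian cycle on P, exactly 2k of the 2k+1 edges contain I; moreover, if a Hamiltonian cycle C has fewer than 2k edges containing I, then the length of C is at most the maximum cycle length minus 2h. -/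
open scoped Classical

/-- The number of edges of the cycle `l` containing the interval `(u, u+h)`. -/
noncomputable def edgesContaining (l : List ℝ) (u h : ℝ) : ℕ :=
  ((l.zip (l.rotate 1)).filter
    fun e => decide (min e.1 e.2 ≤ u ∧ u + h ≤ max e.1 e.2)).length

namespace Stmt5Aux

noncomputable def pathLen (l : List ℝ) : ℝ :=
  ((l.zip l.tail).map fun p => |p.1 - p.2|).sum

def fstE (l : List ℝ) : ℝ := l.headI
def lastE (l : List ℝ) : ℝ := l.reverse.headI

@[simp] lemma fstE_cons (a : ℝ) (l : List ℝ) : fstE (a :: l) = a := rfl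

@[simp] lemma lastE_concat (l : List ℝ) (x : ℝ) : lastE (l ++ [x]) = x := by
  simp [lastE, List.reverse_append]

@[simp] lemma lastE_single (a : ℝ) : lastE [a] = a := rfl

lemma fstE_append (A B : List ℝ) (h : A ≠ []) : fstE (A ++ B) = fstE A := by
  cases A with
  | nil => exact absurd rfl h
  | cons a t => rfl

lemma lastE_cons (a : ℝ) (l : List ℝ) (h : l ≠ []) : lastE (a :: l) = lastE l := by
  unfold lastE
  rw [List.reverse_cons]
  cases hr : l.reverse with
  | nil => exact absurd (List.reverse_eq_nil_iff.mp hr) h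
  | cons b r => rfl

lemma lastE_append (A B : List ℝ) (h : B ≠ []) : lastE (A ++ B) = lastE B := by
  unfold lastE
  rw [List.reverse_append]
  cases hr : B.reverse with
  | nil => exact absurd (List.reverse_eq_nil_iff.mp hr) h
  | cons b r => rfl

lemma fstE_reverse (l : List ℝ) : fstE l.reverse = lastE l := rfl

lemma lastE_reverse (l : List ℝ) : lastE l.reverse = fstE l := by
  simp [lastE, fstE]

@[simp] lemma pathLen_nil : pathLen [] = 0 := rfl
@[simp] lemma pathLen_single (a : ℝ) : pathLen [a] = 0 := rfl

lemma pathLen_cons_cons (a b : ℝ) (l : List ℝ) :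
    pathLen (a :: b :: l) = |a - b| + pathLen (b :: l) := by
  simp [pathLen]

lemma pathLen_cons (a : ℝ) (l : List ℝ) (h : l ≠ []) :
    pathLen (a :: l) = |a - fstE l| + pathLen l := by
  cases l with
  | nil => exact absurd rfl h
  | cons b t => rw [pathLen_cons_cons]; rfl

lemma pathLen_append (A B : List ℝ) (hA : A ≠ []) (hB : B ≠ []) :
    pathLen (A ++ B) = pathLen A + |lastE A - fstE B| + pathLen B := by
  induction A with
  | nil => exact absurd rfl hA
  | cons a t ih =>
    cases t with
    | nil =>
      simp only [List.nil_append, List.cons_append, lastE_single, pathLen_single]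
      rw [pathLen_cons a B hB]; ring
    | cons b t' =>
      have h1 : (a :: b :: t') ++ B = a :: b :: (t' ++ B) := rfl
      rw [h1, pathLen_cons_cons, ← List.cons_append, ih (by simp),
        pathLen_cons_cons, lastE_cons a (b :: t') (by simp)]
      ring

lemma pathLen_reverse (l : List ℝ) : pathLen l.reverse = pathLen l := by
  induction l with
  | nil => rfl
  | cons a t ih =>
    cases t with
    | nil => rfl
    | cons b t' =>
      rw [List.reverse_cons, pathLen_append _ [a] (by simp) (by simp), ih,
        lastE_reverse, pathLen_cons_cons]
      simp [abs_sub_comm, fstE]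
      ring

lemma zip_tail_concat (l : List ℝ) (x : ℝ) (h : l ≠ []) :
    l.zip (l.tail ++ [x]) = l.zip l.tail ++ [(lastE l, x)] := by
  induction l with
  | nil => exact absurd rfl h
  | cons a t ih =>
    cases t with
    | nil => simp
    | cons b t' =>
      have : (a :: b :: t').zip ((a :: b :: t').tail ++ [x])
          = (a, b) :: (b :: t').zip (t' ++ [x]) := rfl
      have ih' := ih (by simp)
      simp only [List.tail_cons] at ih'
      rw [this, ih', lastE_cons a (b :: t') (by simp)]
      rfl

lemma cycleLen_eq (l : List ℝ) (h : l ≠ []) :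
    cycleLen l = pathLen l + |lastE l - fstE l| := by
  cases l with
  | nil => exact absurd rfl h
  | cons a t =>
    have hrot : (a :: t).rotate 1 = t ++ [a] := by
      rw [List.rotate_cons_succ, List.rotate_zero]
    unfold cycleLen pathLen
    rw [hrot]
    have : (a :: t).zip (t ++ [a]) = (a :: t).zip ((a :: t).tail ++ [a]) := rfl
    rw [this, zip_tail_concat _ _ (by simp)]
    simp

lemma cycleLen_two_blocks (A B : List ℝ) (hA : A ≠ []) (hB : B ≠ []) :
    cycleLen (A ++ B) = pathLen A + pathLen B + |lastE A - fstE B| + |lastE B - fstE A| := by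
  rw [cycleLen_eq _ (by simp [hA]), pathLen_append A B hA hB,
    lastE_append A B hB, fstE_append A B hA]
  ring

end Stmt5Aux

namespace Stmt5Aux

lemma getElem_idx_congr {α : Type*} {l : List α} {i j : ℕ} (h : i = j) (hi : i < l.length) :
    l[i]'hi = l[j]'(h ▸ hi) := by subst h; rfl

lemma getElem_list_congr {α : Type*} {l l' : List α} (h : l = l') (i : ℕ) (hi : i < l.length) :
    l[i]'hi = l'[i]'(h ▸ hi) := by subst h; rfl

lemma pairs_rotate (l : List ℝ) (n : ℕ) :
    (l.rotate n).zip ((l.rotate n).rotate 1) = (l.zip (l.rotate 1)).rotate n := by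
  rcases eq_or_ne l [] with rfl | hl
  · simp
  have hpos : 0 < l.length := List.length_pos_iff.mpr hl
  apply List.ext_getElem
  · simp [List.length_zip]
  · intro i h1 h2
    have hi : i < l.length := by simpa [List.length_zip] using h1
    simp only [List.getElem_rotate, List.getElem_zip, List.length_rotate, List.length_zip,
      min_self]
    refine Prod.ext rfl ?_
    simp only
    refine (getElem_idx_congr ?_ _).trans rfl
    rw [Nat.mod_add_mod, Nat.mod_add_mod]
    ring_nf

lemma cycleLen_rotate (l : List ℝ) (n : ℕ) : cycleLen (l.rotate n) = cycleLen l := by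
  unfold cycleLen
  rw [pairs_rotate]
  exact (((l.zip (l.rotate 1)).rotate_perm n).map _).sum_eq

lemma mem_zip_tail {x y : ℝ} : ∀ {l : List ℝ}, (x, y) ∈ l.zip l.tail →
    ∃ A B, l = A ++ x :: y :: B := by
  intro l
  induction l with
  | nil => intro h; simp at h
  | cons a t ih =>
    intro hmem
    cases t with
    | nil => simp at hmem
    | cons b t' =>
      have hsplit : (x, y) = (a, b) ∨ (x, y) ∈ (b :: t').zip t' := by
        simpa using hmem
      rcases hsplit with heq | hmem'
      · have hxy : x = a ∧ y = b := by simpa using heq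
        obtain ⟨rfl, rfl⟩ := hxy
        exact ⟨[], t', rfl⟩
      · have hmem'' : (x, y) ∈ (b :: t').zip (b :: t').tail := hmem'
        obtain ⟨A, B, hAB⟩ := ih hmem''
        exact ⟨a :: A, B, by rw [List.cons_append, ← hAB]⟩

lemma wrapform (C1 : List ℝ) (hC1ne : C1 ≠ []) :
    C1.zip (C1.rotate 1) = C1.zip C1.tail ++ [(lastE C1, fstE C1)] := by
  cases C1 with
  | nil => exact absurd rfl hC1ne
  | cons a t =>
    have hrot : (a :: t).rotate 1 = t ++ [a] := by
      rw [List.rotate_cons_succ, List.rotate_zero]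
    rw [hrot]
    have : (a :: t).zip (t ++ [a]) = (a :: t).zip ((a :: t).tail ++ [a]) := rfl
    rw [this, zip_tail_concat _ _ (by simp)]
    rfl

lemma surgery (u h : ℝ) (hh : 0 < h) (C : List ℝ) (hC : C ≠ [])
    (hside : ∀ x ∈ C, x ≤ u ∨ u + h ≤ x)
    (hRR : ∃ e ∈ C.zip (C.rotate 1), u < e.1 ∧ u < e.2)
    (hLL : ∃ e ∈ C.zip (C.rotate 1), ¬ u < e.1 ∧ ¬ u < e.2) :
    ∃ C2, C2.Perm C ∧ cycleLen C + 2 * h ≤ cycleLen C2 := by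
  obtain ⟨e, heMem, he1, he2⟩ := hRR
  obtain ⟨f, hfMem, hf1, hf2⟩ := hLL
  obtain ⟨j, hj, hprj⟩ := List.getElem_of_mem heMem
  have hlen : (C.zip (C.rotate 1)).length = C.length := by simp [List.length_zip]
  have hjC : j < C.length := by rw [← hlen]; exact hj
  have hpos : 0 < C.length := List.length_pos_iff.mpr hC
  set C1 := C.rotate (j + 1) with hC1
  have hC1ne : C1 ≠ [] := by
    simp only [hC1, ← List.length_pos_iff, List.length_rotate]
    exact hpos
  have hpairs1 : C1.zip (C1.rotate 1) = (C.zip (C.rotate 1)).rotate (j + 1) :=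
    pairs_rotate C (j + 1)
  have hwrapform := wrapform C1 hC1ne
  -- the wrap pair of C1 is e
  have hwrap_eq : (lastE C1, fstE C1) = e := by
    have hlt : C.length - 1 < (C1.zip (C1.rotate 1)).length := by
      rw [hpairs1, List.length_rotate, hlen]; omega
    have h1 : (C1.zip (C1.rotate 1))[C.length - 1]'hlt = e := by
      rw [getElem_list_congr hpairs1, List.getElem_rotate]
      have hidx : (C.length - 1 + (j + 1)) % (C.zip (C.rotate 1)).length = j := by
        rw [hlen, (by omega : C.length - 1 + (j + 1) = C.length + j),
          Nat.add_mod_left, Nat.mod_eq_of_lt hjC]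
      rw [getElem_idx_congr hidx]
      exact hprj
    rw [← h1, getElem_list_congr hwrapform]
    have hztlen : (C1.zip C1.tail).length = C.length - 1 := by
      simp [hC1, List.length_zip]
    rw [List.getElem_concat_length (by omega)]
  have hlast_r : lastE C1 = e.1 := congrArg Prod.fst hwrap_eq
  have hfst_r : fstE C1 = e.2 := congrArg Prod.snd hwrap_eq
  -- f is an internal pair of C1
  have hfMem1 : f ∈ C1.zip (C1.rotate 1) := by
    rw [hpairs1, List.mem_rotate]; exact hfMem
  have hfInt : f ∈ C1.zip C1.tail := by
    rw [hwrapform, List.mem_append] at hfMem1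
    rcases hfMem1 with h' | h'
    · exact h'
    · exfalso
      have hfe : f = (lastE C1, fstE C1) := by simpa using h'
      rw [hwrap_eq] at hfe
      rw [hfe] at hf1
      exact hf1 he1
  obtain ⟨l1, l2⟩ := f
  obtain ⟨r1, r2⟩ := e
  simp only at hf1 hf2 he1 he2 hlast_r hfst_r
  obtain ⟨A, B, hABform⟩ := mem_zip_tail hfInt
  -- side facts
  have hr1C : r1 ∈ C := (List.of_mem_zip heMem).1
  have hr2C : r2 ∈ C := List.mem_rotate.mp (List.of_mem_zip heMem).2
  have hr1 : u + h ≤ r1 := by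
    rcases hside r1 hr1C with h' | h'
    · linarith
    · exact h'
  have hr2 : u + h ≤ r2 := by
    rcases hside r2 hr2C with h' | h'
    · linarith
    · exact h'
  have hl1 : l1 ≤ u := not_lt.mp hf1
  have hl2 : l2 ≤ u := not_lt.mp hf2
  -- the 2-opt exchange
  set A' : List ℝ := A ++ [l1] with hA'
  set B' : List ℝ := l2 :: B with hB'
  have hC1AB : C1 = A' ++ B' := by
    rw [hABform, hA', hB']
    simp
  have hA'ne : A' ≠ [] := by simp [hA']
  have hB'ne : B' ≠ [] := by simp [hB']
  have hlastA' : lastE A' = l1 := lastE_concat A l1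
  have hfstB' : fstE B' = l2 := rfl
  have hfstA' : fstE A' = r2 := by
    rw [← hfst_r, hC1AB, fstE_append _ _ hA'ne]
  have hlastB' : lastE B' = r1 := by
    rw [← hlast_r, hC1AB, lastE_append _ _ hB'ne]
  refine ⟨A' ++ B'.reverse, ?_, ?_⟩
  · have hp1 : (A' ++ B'.reverse).Perm (A' ++ B') := (B'.reverse_perm).append_left A'
    have hp2 : C1.Perm C := C.rotate_perm (j + 1)
    exact hp1.trans (hC1AB ▸ hp2)
  · have hcyc1 : cycleLen C1 = pathLen A' + pathLen B' + |l1 - l2| + |r1 - r2| := by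
      rw [hC1AB, cycleLen_two_blocks _ _ hA'ne hB'ne, hlastA', hfstB', hlastB', hfstA']
    have hcyc2 : cycleLen (A' ++ B'.reverse)
        = pathLen A' + pathLen B' + |l1 - r1| + |l2 - r2| := by
      rw [cycleLen_two_blocks _ _ hA'ne (by simp [hB'ne]), pathLen_reverse,
        fstE_reverse, lastE_reverse, hlastA', hfstB', hlastB', hfstA']
    have hCeq : cycleLen C = cycleLen C1 := (cycleLen_rotate C (j + 1)).symm
    have habs1 : |l1 - r1| = r1 - l1 := by
      rw [abs_of_nonpos (by linarith)]; ring
    have habs2 : |l2 - r2| = r2 - l2 := by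
      rw [abs_of_nonpos (by linarith)]; ring
    have habs3 : |l1 - l2| ≤ (u - l1) + (u - l2) :=
      abs_le.mpr ⟨by linarith, by linarith⟩
    have habs4 : |r1 - r2| ≤ (r1 - (u + h)) + (r2 - (u + h)) :=
      abs_le.mpr ⟨by linarith, by linarith⟩
    rw [hCeq, hcyc1, hcyc2, habs1, habs2]
    linarith

end Stmt5Aux

namespace Stmt5Aux

lemma countP_split {α : Type*} (p q : α → Bool) (l : List α) :
    l.countP p = l.countP (fun x => p x && q x) + l.countP (fun x => p x && !q x) := by
  rw [List.countP_eq_length_filter (p := p) (l := l), List.length_eq_countP_add_countP q,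
    List.countP_filter, List.countP_filter]
  congr 1
  · exact List.countP_congr (fun x _ => by cases hp : p x <;> cases hq : q x <;> simp [hp, hq])
  · exact List.countP_congr (fun x _ => by cases hp : p x <;> cases hq : q x <;> simp [hp, hq])

lemma counting (u h : ℝ) (C : List ℝ) (k : ℕ)
    (hlen : C.length = 2 * k + 1)
    (hcnt : C.countP (fun x => decide (u < x)) = k)
    (hclass : ∀ e ∈ C.zip (C.rotate 1),
      (decide (min e.1 e.2 ≤ u ∧ u + h ≤ max e.1 e.2)) =
        ((decide (u < e.1) && !decide (u < e.2)) || (!decide (u < e.1) && decide (u < e.2)))) :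
    edgesContaining C u h ≤ 2 * k ∧
      (edgesContaining C u h < 2 * k →
        (∃ e ∈ C.zip (C.rotate 1), u < e.1 ∧ u < e.2) ∧
        (∃ e ∈ C.zip (C.rotate 1), ¬ u < e.1 ∧ ¬ u < e.2)) := by
  set pr := C.zip (C.rotate 1) with hpr
  have hprlen : pr.length = 2 * k + 1 := by
    simp [hpr, List.length_zip, hlen]
  set R1 : ℝ × ℝ → Bool := fun e => decide (u < e.1) with hR1
  set R2 : ℝ × ℝ → Bool := fun e => decide (u < e.2) with hR2
  set a := pr.countP (fun e => R1 e && R2 e) with ha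
  set b1 := pr.countP (fun e => R1 e && !R2 e) with hb1
  set b2 := pr.countP (fun e => !R1 e && R2 e) with hb2
  set d := pr.countP (fun e => !R1 e && !R2 e) with hd
  have hfst : pr.countP R1 = k := by
    have h1 : List.countP ((fun x => decide (u < x)) ∘ Prod.fst) pr = k := by
      rw [← List.countP_map, List.map_fst_zip (by simp)]
      exact hcnt
    exact h1
  have hsnd : pr.countP R2 = k := by
    have h1 : List.countP ((fun x => decide (u < x)) ∘ Prod.snd) pr = k := by
      rw [← List.countP_map, List.map_snd_zip (by simp)]
      rw [(C.rotate_perm 1).countP_eq]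
      exact hcnt
    exact h1
  have e1 : k = a + b1 := by
    rw [← hfst, countP_split R1 R2 pr]
  have e2 : k = a + b2 := by
    rw [← hsnd, countP_split R2 R1 pr]
    congr 1
    · exact List.countP_congr (fun x _ => by cases hx : R1 x <;> cases hy : R2 x <;>
        simp [hx, hy])
    · exact List.countP_congr (fun x _ => by cases hx : R1 x <;> cases hy : R2 x <;>
        simp [hx, hy])
  have e3 : 2 * k + 1 = (a + b1) + (b2 + d) := by
    rw [← hprlen, List.length_eq_countP_add_countP R1]
    congr 1
    · exact e1 ▸ hfst
    · rw [countP_split (fun x => decide ¬R1 x) R2 pr]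
      congr 1
      · exact List.countP_congr (fun x _ => by cases hx : R1 x <;> cases hy : R2 x <;>
          simp [hx, hy])
      · exact List.countP_congr (fun x _ => by cases hx : R1 x <;> cases hy : R2 x <;>
          simp [hx, hy])
  have e4 : edgesContaining C u h = b1 + b2 := by
    have h0 : edgesContaining C u h =
        pr.countP (fun e => decide (min e.1 e.2 ≤ u ∧ u + h ≤ max e.1 e.2)) := by
      rw [edgesContaining, List.countP_eq_length_filter]
    have h1 : pr.countP (fun e => decide (min e.1 e.2 ≤ u ∧ u + h ≤ max e.1 e.2)) =
        pr.countP (fun e => (R1 e && !R2 e) || (!R1 e && R2 e)) :=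
      List.countP_congr (fun e he => by rw [hclass e he])
    have h2 : pr.countP (fun e => (R1 e && !R2 e) || (!R1 e && R2 e)) = b1 + b2 := by
      rw [countP_split (fun e => (R1 e && !R2 e) || (!R1 e && R2 e)) R1 pr]
      congr 1
      · exact List.countP_congr (fun x _ => by cases hx : R1 x <;> cases hy : R2 x <;>
          simp [hx, hy])
      · exact List.countP_congr (fun x _ => by cases hx : R1 x <;> cases hy : R2 x <;>
          simp [hx, hy])
    rw [h0, h1, h2]
  constructor
  · omega
  · intro hlt
    have hapos : 0 < a := by omega
    have hdpos : 0 < d := by omega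
    constructor
    · obtain ⟨e, heMem, heP⟩ := List.countP_pos_iff.mp hapos
      simp only [hR1, hR2, Bool.and_eq_true, decide_eq_true_eq] at heP
      exact ⟨e, heMem, heP.1, heP.2⟩
    · obtain ⟨e, heMem, heP⟩ := List.countP_pos_iff.mp hdpos
      simp only [hR1, hR2, Bool.and_eq_true, Bool.not_eq_true', decide_eq_false_iff_not] at heP
      exact ⟨e, heMem, heP.1, heP.2⟩

end Stmt5Aux

namespace Stmt5Aux

lemma classify_bool (u h a b : ℝ) (hh : 0 < h)
    (ha : a ≤ u ∨ u + h ≤ a) (hb : b ≤ u ∨ u + h ≤ b) :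
    decide (min a b ≤ u ∧ u + h ≤ max a b) =
      ((decide (u < a) && !decide (u < b)) || (!decide (u < a) && decide (u < b))) := by
  have hform : ((decide (u < a) && !decide (u < b)) || (!decide (u < a) && decide (u < b)))
      = decide ((u < a ∧ b ≤ u) ∨ (a ≤ u ∧ u < b)) := by
    rcases le_or_gt a u with h1 | h1 <;> rcases le_or_gt b u with h2 | h2
    · simp [h1, h2, not_lt.mpr h1, not_lt.mpr h2]
    · simp [h1, h2, not_lt.mpr h1, not_le.mpr h2]
    · simp [h1, h2, not_lt.mpr h2, not_le.mpr h1]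
    · simp [h1, h2, not_le.mpr h1, not_le.mpr h2]
  rw [hform, decide_eq_decide]
  constructor
  · rintro ⟨h1, h2⟩
    rcases ha with ha | ha <;> rcases hb with hb | hb
    · exact absurd h2 (by have := max_le ha hb; linarith)
    · exact Or.inr ⟨ha, by linarith⟩
    · exact Or.inl ⟨by linarith, hb⟩
    · exact absurd h1 (by have := le_min ha hb; linarith)
  · rintro (⟨h1, h2⟩ | ⟨h1, h2⟩)
    · have ha' : u + h ≤ a := by
        rcases ha with ha | ha
        · linarith
        · exact ha
      exact ⟨le_trans (min_le_right a b) h2, le_trans ha' (le_max_left a b)⟩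
    · have hb' : u + h ≤ b := by
        rcases hb with hb | hb
        · linarith
        · exact hb
      exact ⟨le_trans (min_le_left a b) h1, le_trans hb' (le_max_right a b)⟩

end Stmt5Aux

/-- Let `P` be a set of `2k+1 ≥ 3` distinct reals and let `I = (u, u+h)` be an
interval of length `h > 0` lying between the `(k+1)`-st and `(k+2)`-nd smallest
elements of `P`. Then any longest Hamiltonian cycle on `P` has exactly `2k`
edges containing `I`, and any Hamiltonian cycle with fewer than `2k` edges
containing `I` is at least `2h` shorter than any longest cycle. -/
theorem stmt5 (k : ℕ) (hk : 1 ≤ k) (P : Finset ℝ) (hcard : P.card = 2 * k + 1)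
    (u h : ℝ) (hh : 0 < h)
    (hI : (P.sort (· ≤ ·)).getD k 0 ≤ u ∧ u + h ≤ (P.sort (· ≤ ·)).getD (k + 1) 0) :
    (∀ C : List ℝ, IsHamCycleOn P C →
      (∀ L : List ℝ, IsHamCycleOn P L → cycleLen L ≤ cycleLen C) →
      edgesContaining C u h = 2 * k) ∧
    (∀ C : List ℝ, IsHamCycleOn P C → edgesContaining C u h < 2 * k →
      ∀ Cmax : List ℝ, IsHamCycleOn P Cmax →
        (∀ L : List ℝ, IsHamCycleOn P L → cycleLen L ≤ cycleLen Cmax) →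
        cycleLen C + 2 * h ≤ cycleLen Cmax) := by
  classical
  set s : List ℝ := P.sort (· ≤ ·) with hs
  have hslen : s.length = 2 * k + 1 := by rw [hs, Finset.length_sort]; exact hcard
  have hsorted : s.Pairwise (· < ·) := List.sortedLT_iff_pairwise.mp (Finset.sortedLT_sort P)
  have hmono : ∀ i j (hi : i < s.length) (hj : j < s.length), i < j → s[i] < s[j] :=
    fun i j hi hj hij => (List.pairwise_iff_getElem.mp hsorted) i j hi hj hij
  have hk1 : k < s.length := by omega
  have hk2 : k + 1 < s.length := by omega
  have hu1 : s[k]'hk1 ≤ u := by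
    rw [← List.getD_eq_getElem s 0 hk1]; exact hI.1
  have hu2 : u + h ≤ s[k+1]'hk2 := by
    rw [← List.getD_eq_getElem s 0 hk2]; exact hI.2
  have hside_s : ∀ x ∈ s, x ≤ u ∨ u + h ≤ x := by
    intro x hx
    obtain ⟨i, hi, rfl⟩ := List.mem_iff_getElem.mp hx
    by_cases hik : i ≤ k
    · left
      rcases eq_or_lt_of_le hik with rfl | hik'
      · exact hu1
      · exact le_trans (le_of_lt (hmono i k hi hk1 hik')) hu1
    · right
      push_neg at hik
      rcases eq_or_lt_of_le (by omega : k + 1 ≤ i) with heq | hik'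
      · exact heq ▸ hu2
      · exact le_trans hu2 (le_of_lt (hmono (k+1) i hk2 hi hik'))
  have hcount_s : s.countP (fun x => decide (u < x)) = k := by
    conv_lhs => rw [← List.take_append_drop (k+1) s]
    rw [List.countP_append]
    have h1 : (s.take (k+1)).countP (fun x => decide (u < x)) = 0 := by
      rw [List.countP_eq_zero]
      intro a ha
      obtain ⟨i, hi, rfl⟩ := List.mem_iff_getElem.mp ha
      have hi' : i < k + 1 := by
        have := hi; simp only [List.length_take, hslen] at this; omega
      rw [List.getElem_take]
      simp only [decide_eq_true_eq, not_lt]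
      rcases eq_or_lt_of_le (by omega : i ≤ k) with rfl | hik'
      · exact hu1
      · exact le_trans (le_of_lt (hmono i k (by omega) hk1 hik')) hu1
    have h2 : (s.drop (k+1)).countP (fun x => decide (u < x)) = (s.drop (k+1)).length := by
      rw [List.countP_eq_length]
      intro a ha
      obtain ⟨i, hi, rfl⟩ := List.mem_iff_getElem.mp ha
      rw [List.getElem_drop]
      simp only [decide_eq_true_eq]
      have hib : k + 1 + i < s.length := by
        have := hi; simp only [List.length_drop, hslen] at this; omega
      have hle : s[k+1]'hk2 ≤ s[k+1+i]'hib := by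
        rcases Nat.eq_zero_or_pos i with rfl | hipos
        · exact le_of_eq (Stmt5Aux.getElem_idx_congr (by omega) hk2)
        · exact le_of_lt (hmono (k+1) (k+1+i) hk2 hib (by omega))
      linarith
    rw [h1, h2, List.length_drop, hslen]
    omega
  have hsfin : s.toFinset = P := Finset.sort_toFinset P _
  -- key facts for any Hamiltonian cycle
  have keyfacts : ∀ C : List ℝ, IsHamCycleOn P C →
      (edgesContaining C u h ≤ 2 * k ∧ (edgesContaining C u h < 2 * k →
        ∃ C2, IsHamCycleOn P C2 ∧ cycleLen C + 2 * h ≤ cycleLen C2)) := by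
    intro C hC
    have hperm : C.Perm s :=
      List.perm_of_nodup_nodup_toFinset_eq hC.1 (Finset.sort_nodup P _) (by rw [hC.2, hsfin])
    have hClen : C.length = 2 * k + 1 := by rw [hperm.length_eq, hslen]
    have hcnt : C.countP (fun x => decide (u < x)) = k := by
      rw [hperm.countP_eq]; exact hcount_s
    have hsideC : ∀ x ∈ C, x ≤ u ∨ u + h ≤ x := fun x hx =>
      hside_s x (hperm.mem_iff.mp hx)
    have hCne : C ≠ [] := by
      intro h0; rw [h0] at hClen; simp at hClen
    have hclass : ∀ e ∈ C.zip (C.rotate 1),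
        (decide (min e.1 e.2 ≤ u ∧ u + h ≤ max e.1 e.2)) =
          ((decide (u < e.1) && !decide (u < e.2)) || (!decide (u < e.1) && decide (u < e.2))) := by
      intro e he
      obtain ⟨a, b⟩ := e
      have hab := List.of_mem_zip he
      exact Stmt5Aux.classify_bool u h a b hh (hsideC a hab.1)
        (hsideC b (List.mem_rotate.mp hab.2))
    obtain ⟨hle, hex⟩ := Stmt5Aux.counting u h C k hClen hcnt hclass
    refine ⟨hle, fun hlt => ?_⟩
    obtain ⟨hRR, hLL⟩ := hex hlt
    obtain ⟨C2, hC2p, hC2len⟩ := Stmt5Aux.surgery u h hh C hCne hsideC hRR hLL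
    exact ⟨C2, ⟨(hC2p.nodup_iff).mpr hC.1,
      (List.toFinset_eq_of_perm _ _ hC2p).trans hC.2⟩, hC2len⟩
  constructor
  · intro C hC hmax
    by_contra hne
    have hlt : edgesContaining C u h < 2 * k := lt_of_le_of_ne ((keyfacts C hC).1) hne
    obtain ⟨C2, hC2, hgain⟩ := (keyfacts C hC).2 hlt
    have := hmax C2 hC2
    linarith
  · intro C hC hlt Cmax hCmax hmax
    obtain ⟨C2, hC2, hgain⟩ := (keyfacts C hC).2 hlt
    have := hmax C2 hC2
    linarith
end

section
/- Let e = [a,b] and e' = [c,d] be two disjoint (non-intersecting) closed line segments in the plane with endpoints in general position (no three of a,b,c,d collinear). Then there exist an endpoint p ∈ {a,b} and an endpoint p' ∈ {c,d} such that |pp'| > min(|ab|, |cd|). -/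
/-- A point in the Euclidean plane. -/
abbrev Pt := EuclideanSpace ℝ (Fin 2)

lemma st16_dist_sq (p q : Pt) : dist p q ^ 2 = (p 0 - q 0)^2 + (p 1 - q 1)^2 := by
  rw [EuclideanSpace.dist_eq, Real.sq_sqrt (Finset.sum_nonneg fun i _ => sq_nonneg _)]
  simp [Fin.sum_univ_two, Real.dist_eq, sq_abs]

lemma st16_ne {a b c : Pt} (h : ¬ Collinear ℝ ({a, b, c} : Set Pt)) : a ≠ b := by
  rintro rfl
  apply h
  have : ({a, a, c} : Set Pt) = {a, c} := by simp
  rw [this]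
  exact collinear_pair ℝ a c

lemma st16_collinear_of_cross (a b p : Pt) (hab : a ≠ b)
    (h : (b 0 - a 0) * (p 1 - a 1) - (b 1 - a 1) * (p 0 - a 0) = 0) :
    Collinear ℝ ({a, b, p} : Set Pt) := by
  have hs2 : (b 0 - a 0)^2 + (b 1 - a 1)^2 ≠ 0 := by
    intro h0
    apply hab
    have h1 : b 0 - a 0 = 0 := by nlinarith [sq_nonneg (b 0 - a 0), sq_nonneg (b 1 - a 1)]
    have h2 : b 1 - a 1 = 0 := by nlinarith [sq_nonneg (b 0 - a 0), sq_nonneg (b 1 - a 1)]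
    ext i
    fin_cases i
    · show a 0 = b 0; linarith
    · show a 1 = b 1; linarith
  rw [collinear_iff_of_mem (Set.mem_insert a {b, p})]
  refine ⟨b - a, fun q hq => ?_⟩
  simp only [Set.mem_insert_iff, Set.mem_singleton_iff] at hq
  rcases hq with rfl | rfl | rfl
  · exact ⟨0, by simp⟩
  · exact ⟨1, by simp⟩
  · refine ⟨((b 0 - a 0) * (q 0 - a 0) + (b 1 - a 1) * (q 1 - a 1)) / ((b 0 - a 0)^2 + (b 1 - a 1)^2), ?_⟩
    ext i
    fin_cases i
    · show q 0 = (_ • (b - a) + a) 0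
      simp only [PiLp.add_apply, PiLp.smul_apply, PiLp.sub_apply, smul_eq_mul]
      field_simp
      linear_combination (-(b 1 - a 1)) * h
    · show q 1 = (_ • (b - a) + a) 1
      simp only [PiLp.add_apply, PiLp.smul_apply, PiLp.sub_apply, smul_eq_mul]
      field_simp
      linear_combination (b 0 - a 0) * h

lemma st16_alg0 (s X Y x y : ℝ) (hs : 0 < s) (hy : 0 < y) (hyY : y ≤ Y)
    (hA : X^2 + Y^2 ≤ s^2) (hB : (X - s)^2 + Y^2 ≤ s^2)
    (hC : x^2 + y^2 ≤ s^2) (hD : (x - s)^2 + y^2 ≤ s^2)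
    (hfar : s^2 ≤ (X - x)^2 + (Y - y)^2) : False := by
  have hx0 : 0 ≤ x := by nlinarith [sq_nonneg x, sq_nonneg y]
  have hx1 : x ≤ s := by nlinarith [sq_nonneg y]
  nlinarith [mul_nonneg (sub_nonneg.2 hx1) (sub_nonneg.2 hA),
    mul_nonneg hx0 (sub_nonneg.2 hB),
    mul_pos hs (mul_pos hy hy),
    mul_nonneg (mul_nonneg hs.le hx0) (sub_nonneg.2 hx1),
    mul_nonneg (sub_nonneg.2 hyY) hy.le]

lemma st16_alg1 (s X Y x y : ℝ) (hs : 0 < s)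
    (hA : X^2 + Y^2 ≤ s^2) (hB : (X - s)^2 + Y^2 ≤ s^2)
    (hC : x^2 + y^2 ≤ s^2) (hD : (x - s)^2 + y^2 ≤ s^2)
    (hsame : 0 < Y * y) (hfar : s^2 ≤ (X - x)^2 + (Y - y)^2) : False := by
  rcases lt_trichotomy Y 0 with hY | hY | hY
  · have hy : y < 0 := by nlinarith
    rcases le_total (-y) (-Y) with hyY | hyY
    · exact st16_alg0 s X (-Y) x (-y) hs (by linarith) hyY (by linarith [hA]) (by linarith [hB])
        (by linarith [hC]) (by linarith [hD]) (by linarith [hfar])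
    · exact st16_alg0 s x (-y) X (-Y) hs (by linarith) hyY (by linarith [hC]) (by linarith [hD])
        (by linarith [hA]) (by linarith [hB]) (by linarith [hfar])
  · simp [hY] at hsame
  · have hy : 0 < y := by nlinarith
    rcases le_total y Y with hyY | hyY
    · exact st16_alg0 s X Y x y hs hy hyY hA hB hC hD hfar
    · exact st16_alg0 s x y X Y hs hY hyY hC hD hA hB (by linarith [hfar])

lemma st16_s2_pos (a0 a1 b0 b1 c0 c1 d0 d1 : ℝ)
    (hsame : ((b0-a0)*(c1-a1) - (b1-a1)*(c0-a0)) * ((b0-a0)*(d1-a1) - (b1-a1)*(d0-a0)) ≠ 0) :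
    0 < (b0-a0)^2 + (b1-a1)^2 := by
  rcases lt_or_ge 0 ((b0-a0)^2 + (b1-a1)^2) with h | h
  · exact h
  · exfalso
    have h1 : b0 - a0 = 0 := by nlinarith [sq_nonneg (b0-a0), sq_nonneg (b1-a1)]
    have h2 : b1 - a1 = 0 := by nlinarith [sq_nonneg (b0-a0), sq_nonneg (b1-a1)]
    rw [h1, h2] at hsame
    simp at hsame

lemma st16_same_side (a0 a1 b0 b1 c0 c1 d0 d1 : ℝ)
    (hac : (c0-a0)^2+(c1-a1)^2 ≤ (b0-a0)^2+(b1-a1)^2)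
    (hbc : (c0-b0)^2+(c1-b1)^2 ≤ (b0-a0)^2+(b1-a1)^2)
    (had : (d0-a0)^2+(d1-a1)^2 ≤ (b0-a0)^2+(b1-a1)^2)
    (hbd : (d0-b0)^2+(d1-b1)^2 ≤ (b0-a0)^2+(b1-a1)^2)
    (hcd : (b0-a0)^2+(b1-a1)^2 ≤ (c0-d0)^2+(c1-d1)^2)
    (hsame : 0 < ((b0-a0)*(c1-a1) - (b1-a1)*(c0-a0)) * ((b0-a0)*(d1-a1) - (b1-a1)*(d0-a0))) :
    False := by
  have hs2 : 0 < (b0-a0)^2 + (b1-a1)^2 := st16_s2_pos a0 a1 b0 b1 c0 c1 d0 d1 (ne_of_gt hsame)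
  exact st16_alg1 ((b0-a0)^2 + (b1-a1)^2)
    ((b0-a0)*(c0-a0) + (b1-a1)*(c1-a1)) ((b0-a0)*(c1-a1) - (b1-a1)*(c0-a0))
    ((b0-a0)*(d0-a0) + (b1-a1)*(d1-a1)) ((b0-a0)*(d1-a1) - (b1-a1)*(d0-a0))
    hs2
    (by linarith [mul_nonneg hs2.le (sub_nonneg.2 hac)])
    (by linarith [mul_nonneg hs2.le (sub_nonneg.2 hbc)])
    (by linarith [mul_nonneg hs2.le (sub_nonneg.2 had)])
    (by linarith [mul_nonneg hs2.le (sub_nonneg.2 hbd)])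
    hsame
    (by linarith [mul_nonneg hs2.le (sub_nonneg.2 hcd)])

lemma st16_convex_bound (S X Y x y t : ℝ) (ht0 : 0 ≤ t) (ht1 : t ≤ 1)
    (hA : X^2+Y^2 ≤ S^2) (hB : (X-S)^2+Y^2 ≤ S^2)
    (hC : x^2+y^2 ≤ S^2) (hD : (x-S)^2+y^2 ≤ S^2)
    (hS : 0 < S) (hyp : (1-t)*Y + t*y = 0) :
    0 ≤ (1-t)*X + t*x ∧ (1-t)*X + t*x ≤ S := by
  have ht1' : 0 ≤ 1 - t := by linarith
  have hyp2 : ((1-t)*Y + t*y)^2 = 0 := by rw [hyp]; ring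
  have hprod := mul_nonneg (mul_nonneg ht0 ht1') (add_nonneg (sq_nonneg (X - x)) (sq_nonneg (Y - y)))
  have key1 : ((1-t)*X + t*x)^2 ≤ S^2 := by
    nlinarith [hprod, mul_nonneg ht1' (sub_nonneg.2 hA), mul_nonneg ht0 (sub_nonneg.2 hC), hyp2]
  have key2 : (((1-t)*X + t*x) - S)^2 ≤ S^2 := by
    nlinarith [hprod, mul_nonneg ht1' (sub_nonneg.2 hB), mul_nonneg ht0 (sub_nonneg.2 hD), hyp2]
  constructor
  · nlinarith [key2, hS, sq_nonneg ((1-t)*X + t*x)]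
  · nlinarith [key1, hS]

lemma st16_cross_real (a0 a1 b0 b1 c0 c1 d0 d1 : ℝ)
    (hac : (c0-a0)^2+(c1-a1)^2 ≤ (b0-a0)^2+(b1-a1)^2)
    (hbc : (c0-b0)^2+(c1-b1)^2 ≤ (b0-a0)^2+(b1-a1)^2)
    (had : (d0-a0)^2+(d1-a1)^2 ≤ (b0-a0)^2+(b1-a1)^2)
    (hbd : (d0-b0)^2+(d1-b1)^2 ≤ (b0-a0)^2+(b1-a1)^2)
    (hopp : ((b0-a0)*(c1-a1) - (b1-a1)*(c0-a0)) * ((b0-a0)*(d1-a1) - (b1-a1)*(d0-a0)) < 0) :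
    ∃ t u : ℝ, 0 ≤ t ∧ t ≤ 1 ∧ 0 ≤ u ∧ u ≤ 1 ∧
      c0 + t*(d0 - c0) = a0 + u*(b0 - a0) ∧ c1 + t*(d1 - c1) = a1 + u*(b1 - a1) := by
  have hs2 : 0 < (b0-a0)^2 + (b1-a1)^2 := st16_s2_pos a0 a1 b0 b1 c0 c1 d0 d1 (ne_of_lt hopp)
  obtain ⟨t, ht0, ht1, hyp⟩ : ∃ t, 0 ≤ t ∧ t ≤ 1 ∧
      (1-t)*((b0-a0)*(c1-a1) - (b1-a1)*(c0-a0)) + t*((b0-a0)*(d1-a1) - (b1-a1)*(d0-a0)) = 0 := by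
    rcases lt_trichotomy ((b0-a0)*(c1-a1) - (b1-a1)*(c0-a0)) 0 with hY | hY | hY
    · have hy : 0 < (b0-a0)*(d1-a1) - (b1-a1)*(d0-a0) := by nlinarith
      have hden : 0 < ((b0-a0)*(d1-a1) - (b1-a1)*(d0-a0)) - ((b0-a0)*(c1-a1) - (b1-a1)*(c0-a0)) := by linarith
      refine ⟨(-((b0-a0)*(c1-a1) - (b1-a1)*(c0-a0)))/(((b0-a0)*(d1-a1) - (b1-a1)*(d0-a0)) - ((b0-a0)*(c1-a1) - (b1-a1)*(c0-a0))), div_nonneg (by linarith) hden.le, (div_le_one hden).2 (by linarith), ?_⟩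
      field_simp
      ring
    · exfalso; rw [hY] at hopp; simp at hopp
    · have hy : (b0-a0)*(d1-a1) - (b1-a1)*(d0-a0) < 0 := by nlinarith
      have hden : 0 < ((b0-a0)*(c1-a1) - (b1-a1)*(c0-a0)) - ((b0-a0)*(d1-a1) - (b1-a1)*(d0-a0)) := by linarith
      refine ⟨((b0-a0)*(c1-a1) - (b1-a1)*(c0-a0))/(((b0-a0)*(c1-a1) - (b1-a1)*(c0-a0)) - ((b0-a0)*(d1-a1) - (b1-a1)*(d0-a0))), div_nonneg (by linarith) hden.le, (div_le_one hden).2 (by linarith), ?_⟩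
      field_simp
      ring
  have hA : ((b0-a0)*(c0-a0) + (b1-a1)*(c1-a1))^2 + ((b0-a0)*(c1-a1) - (b1-a1)*(c0-a0))^2 ≤ ((b0-a0)^2+(b1-a1)^2)^2 := by
    linarith [mul_nonneg hs2.le (sub_nonneg.2 hac)]
  have hB : (((b0-a0)*(c0-a0) + (b1-a1)*(c1-a1)) - ((b0-a0)^2+(b1-a1)^2))^2 + ((b0-a0)*(c1-a1) - (b1-a1)*(c0-a0))^2 ≤ ((b0-a0)^2+(b1-a1)^2)^2 := by
    linarith [mul_nonneg hs2.le (sub_nonneg.2 hbc)]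
  have hC : ((b0-a0)*(d0-a0) + (b1-a1)*(d1-a1))^2 + ((b0-a0)*(d1-a1) - (b1-a1)*(d0-a0))^2 ≤ ((b0-a0)^2+(b1-a1)^2)^2 := by
    linarith [mul_nonneg hs2.le (sub_nonneg.2 had)]
  have hD : (((b0-a0)*(d0-a0) + (b1-a1)*(d1-a1)) - ((b0-a0)^2+(b1-a1)^2))^2 + ((b0-a0)*(d1-a1) - (b1-a1)*(d0-a0))^2 ≤ ((b0-a0)^2+(b1-a1)^2)^2 := by
    linarith [mul_nonneg hs2.le (sub_nonneg.2 hbd)]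
  obtain ⟨hxp0, hxp1⟩ := st16_convex_bound ((b0-a0)^2+(b1-a1)^2)
    ((b0-a0)*(c0-a0) + (b1-a1)*(c1-a1)) ((b0-a0)*(c1-a1) - (b1-a1)*(c0-a0))
    ((b0-a0)*(d0-a0) + (b1-a1)*(d1-a1)) ((b0-a0)*(d1-a1) - (b1-a1)*(d0-a0))
    t ht0 ht1 hA hB hC hD hs2 hyp
  refine ⟨t, ((1-t)*((b0-a0)*(c0-a0) + (b1-a1)*(c1-a1)) + t*((b0-a0)*(d0-a0) + (b1-a1)*(d1-a1)))/((b0-a0)^2+(b1-a1)^2),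
    ht0, ht1, div_nonneg hxp0 hs2.le, (div_le_one hs2).2 hxp1, ?_, ?_⟩
  · field_simp
    linear_combination (-(b1-a1)) * hyp
  · field_simp
    linear_combination (b0-a0) * hyp

lemma st16_key (a b c d : Pt)
    (hdisj : segment ℝ a b ∩ segment ℝ c d = ∅)
    (hc : ¬ Collinear ℝ ({a, b, c} : Set Pt)) (hd : ¬ Collinear ℝ ({a, b, d} : Set Pt))
    (hlen : dist a b ≤ dist c d)
    (hac : dist a c ≤ dist a b) (had : dist a d ≤ dist a b)
    (hbc : dist b c ≤ dist a b) (hbd : dist b d ≤ dist a b) : False := by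
  have hab : a ≠ b := st16_ne hc
  have sq_le : ∀ p q r s : Pt, dist p q ≤ dist r s →
      (q 0 - p 0)^2 + (q 1 - p 1)^2 ≤ (s 0 - r 0)^2 + (s 1 - r 1)^2 := by
    intro p q r s h
    have h2 := pow_le_pow_left₀ dist_nonneg h 2
    rw [st16_dist_sq p q, st16_dist_sq r s] at h2
    linarith [h2]
  have Hac := sq_le a c a b hac
  have Had := sq_le a d a b had
  have Hbc := sq_le b c a b hbc
  have Hbd := sq_le b d a b hbd
  have Hcd := sq_le a b c d hlen
  have hYc : (b 0 - a 0)*(c 1 - a 1) - (b 1 - a 1)*(c 0 - a 0) ≠ 0 :=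
    fun h => hc (st16_collinear_of_cross a b c hab h)
  have hYd : (b 0 - a 0)*(d 1 - a 1) - (b 1 - a 1)*(d 0 - a 0) ≠ 0 :=
    fun h => hd (st16_collinear_of_cross a b d hab h)
  rcases lt_trichotomy (((b 0 - a 0)*(c 1 - a 1) - (b 1 - a 1)*(c 0 - a 0)) *
      ((b 0 - a 0)*(d 1 - a 1) - (b 1 - a 1)*(d 0 - a 0))) 0 with hopp | hzero | hsame
  · obtain ⟨t, u, ht0, ht1, hu0, hu1, he0, he1⟩ :=
      st16_cross_real (a 0) (a 1) (b 0) (b 1) (c 0) (c 1) (d 0) (d 1) Hac Hbc Had Hbd hopp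
    have hmem : (a + u • (b - a)) ∈ segment ℝ a b ∩ segment ℝ c d := by
      constructor
      · rw [segment_eq_image']
        exact ⟨u, ⟨hu0, hu1⟩, rfl⟩
      · rw [segment_eq_image']
        refine ⟨t, ⟨ht0, ht1⟩, ?_⟩
        ext i
        fin_cases i
        · show (c + t • (d - c)) 0 = (a + u • (b - a)) 0
          simp only [PiLp.add_apply, PiLp.smul_apply, PiLp.sub_apply, smul_eq_mul]
          linarith [he0]
        · show (c + t • (d - c)) 1 = (a + u • (b - a)) 1
          simp only [PiLp.add_apply, PiLp.smul_apply, PiLp.sub_apply, smul_eq_mul]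
          linarith [he1]
    rw [hdisj] at hmem
    exact hmem
  · exact (mul_ne_zero hYc hYd) hzero
  · exact st16_same_side (a 0) (a 1) (b 0) (b 1) (c 0) (c 1) (d 0) (d 1)
      Hac Hbc Had Hbd (by linarith [Hcd]) hsame

/-- If `[a,b]` and `[c,d]` are disjoint closed segments in the plane with no three
of the four endpoints collinear, then some endpoint of one segment and some
endpoint of the other are at distance strictly greater than the length of the
shorter segment. -/
theorem stmt16 (a b c d : Pt)
    (hdisj : segment ℝ a b ∩ segment ℝ c d = ∅)
    (h1 : ¬ Collinear ℝ ({a, b, c} : Set Pt))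
    (h2 : ¬ Collinear ℝ ({a, b, d} : Set Pt))
    (h3 : ¬ Collinear ℝ ({a, c, d} : Set Pt))
    (h4 : ¬ Collinear ℝ ({b, c, d} : Set Pt)) :
    ∃ p ∈ ({a, b} : Set Pt), ∃ p' ∈ ({c, d} : Set Pt),
      dist p p' > min (dist a b) (dist c d) := by
  by_contra hcon
  push_neg at hcon
  have hac := hcon a (by simp) c (by simp)
  have had := hcon a (by simp) d (by simp)
  have hbc := hcon b (by simp) c (by simp)
  have hbd := hcon b (by simp) d (by simp)
  rcases le_total (dist a b) (dist c d) with hle | hle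
  · exact st16_key a b c d hdisj h1 h2 hle
      (le_trans hac (min_le_left _ _)) (le_trans had (min_le_left _ _))
      (le_trans hbc (min_le_left _ _)) (le_trans hbd (min_le_left _ _))
  · refine st16_key c d a b ?_ ?_ ?_ hle ?_ ?_ ?_ ?_
    · rw [Set.inter_comm]; exact hdisj
    · intro hcol
      apply h3
      have : ({a, c, d} : Set Pt) = {c, d, a} := by ext z; simp; tauto
      rw [this]; exact hcol
    · intro hcol
      apply h4
      have : ({b, c, d} : Set Pt) = {c, d, b} := by ext z; simp; tauto
      rw [this]; exact hcol
    · rw [dist_comm c a]; exact le_trans hac (min_le_right _ _)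
    · rw [dist_comm c b]; exact le_trans hbc (min_le_right _ _)
    · rw [dist_comm d a]; exact le_trans had (min_le_right _ _)
    · rw [dist_comm d b]; exact le_trans hbd (min_le_right _ _)
end
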